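/- arXiv:2010.04568 — 5 statements merged into one kernel-verified Lean document; each statement's English description precedes it below -/
import Mathlib

section
/- For integer n ≥ 2, lim_{t→0⁺} tⁿ · ∑_{q=1}^∞ C(n+q-2, q) · e^{2tq}/(e^{2tq} - 1)ⁿ = (1/2ⁿ) · ∑_{q=1}^∞ C(n+q-2, q)/qⁿ, and the series on the right converges. -/
open Filter Real Set

theorem stmt4 (n : ℕ) (hn : 2 ≤ n) :
    Summable (fun q : ℕ => ((n + q - 1).choose (q + 1) : ℝ) / (q + 1 : ℝ) ^ n) ∧
    Tendsto (fun t : ℝ => t ^ n * ∑' q : ℕ,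
        ((n + q - 1).choose (q + 1) : ℝ) *
          Real.exp (2 * t * (q + 1)) / (Real.exp (2 * t * (q + 1)) - 1) ^ n)
      (nhdsWithin 0 (Set.Ioi 0))
      (nhds ((1 / 2 ^ n) * ∑' q : ℕ, ((n + q - 1).choose (q + 1) : ℝ) / (q + 1 : ℝ) ^ n)) := by
  obtain ⟨m, rfl⟩ : ∃ m, n = m + 2 := ⟨n - 2, by omega⟩
  clear hn
  set k := m + 2 with hk
  set c : ℕ → ℝ := fun q => ((k + q - 1).choose (q + 1) : ℝ) with hc
  -- choose bound
  have hchoose : ∀ q : ℕ, ((k + q - 1).choose (q + 1)) ≤ ((m + 1) * (q + 1)) ^ m := by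
    intro q
    have e1 : k + q - 1 = m + q + 1 := by omega
    rw [e1]
    have e2 : (m + q + 1).choose (q + 1) = (m + q + 1).choose m := by
      have := Nat.choose_symm (n := m + q + 1) (k := q + 1) (by omega)
      rw [show m + q + 1 - (q + 1) = m from by omega] at this
      exact this.symm
    rw [e2]
    calc (m + q + 1).choose m ≤ (m + q + 1) ^ m := Nat.choose_le_pow _ _
      _ ≤ ((m + 1) * (q + 1)) ^ m := by
          apply Nat.pow_le_pow_left
          have : (m + 1) * (q + 1) = m * q + m + q + 1 := by ring
          omega
  have hcnonneg : ∀ q, 0 ≤ c q := fun q => Nat.cast_nonneg _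
  -- summability
  have hb : Summable (fun q : ℕ => ((m + 1 : ℝ)) ^ m * (1 / ((q : ℝ) + 1) ^ 2)) := by
    apply Summable.mul_left
    have h1 : Summable (fun j : ℕ => 1 / (j : ℝ) ^ 2) :=
      Real.summable_one_div_nat_pow.mpr one_lt_two
    have h2 := (summable_nat_add_iff 1).mpr h1
    refine h2.congr (fun q => ?_)
    push_cast
    ring
  have hsum : Summable (fun q : ℕ => c q / ((q : ℝ) + 1) ^ k) := by
    refine hb.of_nonneg_of_le (fun q => by positivity) (fun q => ?_)
    have h1 : c q ≤ ((m + 1 : ℝ) * ((q : ℝ) + 1)) ^ m := by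
      have := hchoose q
      calc c q ≤ ((((m + 1) * (q + 1) : ℕ)) ^ m : ℝ) := by exact_mod_cast Nat.cast_le.mpr this
        _ = ((m + 1 : ℝ) * ((q : ℝ) + 1)) ^ m := by congr 1; push_cast; ring
    calc c q / ((q : ℝ) + 1) ^ k ≤ ((m + 1 : ℝ) * ((q : ℝ) + 1)) ^ m / ((q : ℝ) + 1) ^ k := by
          gcongr
      _ = (m + 1 : ℝ) ^ m * (1 / ((q : ℝ) + 1) ^ 2) := by
          have hq : ((q : ℝ) + 1) ≠ 0 := by positivity
          rw [mul_pow, hk, pow_add]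
          field_simp
  refine ⟨hsum, ?_⟩
  -- summable bound for dominated convergence
  have hgsum : Summable (fun q : ℕ => c q / (2 * ((q : ℝ) + 1)) ^ k) := by
    refine (hsum.mul_left (1 / 2 ^ k)).congr (fun q => ?_)
    have hq : ((q : ℝ) + 1) ≠ 0 := by positivity
    rw [mul_pow]
    rw [div_mul_eq_div_div_swap, one_div_mul_eq_div]
  -- pointwise limits
  have key : ∀ q : ℕ, Tendsto (fun t : ℝ =>
      t ^ k * (c q * Real.exp (2 * t * ((q : ℝ) + 1)) /
        (Real.exp (2 * t * ((q : ℝ) + 1)) - 1) ^ k))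
      (nhdsWithin 0 (Set.Ioi 0)) (nhds (c q / (2 * ((q : ℝ) + 1)) ^ k)) := by
    intro q
    set d : ℝ := 2 * ((q : ℝ) + 1) with hd
    have hdpos : (0 : ℝ) < d := by positivity
    have h0 : HasDerivAt Real.exp 1 0 := by simpa using Real.hasDerivAt_exp 0
    have hslope := hasDerivAt_iff_tendsto_slope.mp h0
    have hmap : Tendsto (fun t : ℝ => d * t) (nhdsWithin 0 (Set.Ioi 0))
        (nhdsWithin 0 {(0 : ℝ)}ᶜ) := by
      refine tendsto_nhdsWithin_of_tendsto_nhds_of_eventually_within _ ?_ ?_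
      · have : Tendsto (fun t : ℝ => d * t) (nhds 0) (nhds (d * 0)) :=
          (continuous_const.mul continuous_id).tendsto 0
        simpa using this.mono_left nhdsWithin_le_nhds
      · refine Filter.eventually_of_mem self_mem_nhdsWithin (fun t ht => ?_)
        exact (mul_pos hdpos ht).ne'
    have h1 : Tendsto (fun t : ℝ => (Real.exp (d * t) - 1) / (d * t))
        (nhdsWithin 0 (Set.Ioi 0)) (nhds 1) := by
      have := hslope.comp hmap
      refine this.congr (fun t => ?_)
      simp only [Function.comp_apply, slope_fun_def, Real.exp_zero, sub_zero, vsub_eq_sub,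
        smul_eq_mul]
      ring
    have h2 : Tendsto (fun t : ℝ => t / (Real.exp (d * t) - 1))
        (nhdsWithin 0 (Set.Ioi 0)) (nhds (1 / d)) := by
      have h3 := (h1.inv₀ one_ne_zero).const_mul (1 / d)
      have hval : (1 / d) * (1 : ℝ)⁻¹ = 1 / d := by ring
      rw [hval] at h3
      refine h3.congr (fun t => ?_)
      rw [inv_div, ← mul_div_assoc, show (1 / d) * (d * t) = t from by field_simp]
    have hexp : Tendsto (fun t : ℝ => Real.exp (d * t)) (nhdsWithin 0 (Set.Ioi 0)) (nhds 1) := by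
      have : Tendsto (fun t : ℝ => Real.exp (d * t)) (nhds 0) (nhds (Real.exp (d * 0))) :=
        (Real.continuous_exp.comp (continuous_const.mul continuous_id)).tendsto 0
      simpa using this.mono_left nhdsWithin_le_nhds
    have h4 : Tendsto (fun t : ℝ => c q * Real.exp (d * t) * (t / (Real.exp (d * t) - 1)) ^ k)
        (nhdsWithin 0 (Set.Ioi 0)) (nhds (c q * 1 * (1 / d) ^ k)) :=
      (tendsto_const_nhds.mul hexp).mul (h2.pow k)
    have hval2 : c q * 1 * (1 / d) ^ k = c q / d ^ k := by
      rw [one_div, inv_pow]; ring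
    rw [hval2] at h4
    refine h4.congr (fun t => ?_)
    rw [show 2 * t * ((q : ℝ) + 1) = d * t from by rw [hd]; ring, div_pow]
    ring
  -- uniform bound
  have hbound : ∀ᶠ t in nhdsWithin (0:ℝ) (Set.Ioi 0), ∀ q : ℕ,
      ‖t ^ k * (c q * Real.exp (2 * t * ((q : ℝ) + 1)) /
        (Real.exp (2 * t * ((q : ℝ) + 1)) - 1) ^ k)‖ ≤ c q / (2 * ((q : ℝ) + 1)) ^ k := by
    refine Filter.eventually_of_mem self_mem_nhdsWithin (fun t ht q => ?_)
    have htpos : (0 : ℝ) < t := ht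
    set x : ℝ := 2 * t * ((q : ℝ) + 1) with hx
    have hxpos : (0 : ℝ) < x := by positivity
    have hex1 : (1 : ℝ) < Real.exp x := Real.one_lt_exp_iff.mpr hxpos
    have hXpos : (0 : ℝ) < Real.exp x - 1 := by linarith
    -- key inequality: x * exp (x/2) ≤ exp x - 1
    have h5 : x / 2 < Real.sinh (x / 2) := Real.self_lt_sinh_iff.mpr (by positivity)
    rw [Real.sinh_eq] at h5
    have h6 : x * Real.exp (x / 2) ≤ Real.exp x - 1 := by
      have e1 : Real.exp (x / 2) * Real.exp (x / 2) = Real.exp x := by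
        rw [← Real.exp_add]; ring_nf
      have e2 : Real.exp (-(x / 2)) * Real.exp (x / 2) = 1 := by
        rw [← Real.exp_add]; simp
      nlinarith [Real.exp_pos (x / 2), Real.exp_pos (-(x / 2))]
    have h7 : Real.exp x ≤ Real.exp (x / 2) ^ k := by
      rw [← Real.exp_nat_mul]
      refine Real.exp_le_exp.mpr ?_
      rw [hk]
      push_cast
      nlinarith [hxpos, Nat.cast_nonneg (α := ℝ) m]
    have h8 : x ^ k * Real.exp x ≤ (Real.exp x - 1) ^ k :=
      calc x ^ k * Real.exp x ≤ x ^ k * Real.exp (x / 2) ^ k := by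
            exact mul_le_mul_of_nonneg_left h7 (pow_nonneg hxpos.le _)
        _ = (x * Real.exp (x / 2)) ^ k := (mul_pow _ _ _).symm
        _ ≤ (Real.exp x - 1) ^ k := pow_le_pow_left₀ (by positivity) h6 _
    have h9 : Real.exp x / (Real.exp x - 1) ^ k ≤ 1 / x ^ k := by
      rw [div_le_div_iff₀ (by positivity) (by positivity)]
      nlinarith [h8]
    have habs : ‖t ^ k * (c q * Real.exp x / (Real.exp x - 1) ^ k)‖
        = t ^ k * (c q * Real.exp x / (Real.exp x - 1) ^ k) := by
      rw [Real.norm_eq_abs, abs_of_nonneg]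
      have := hcnonneg q
      positivity
    rw [habs]
    calc t ^ k * (c q * Real.exp x / (Real.exp x - 1) ^ k)
        = t ^ k * c q * (Real.exp x / (Real.exp x - 1) ^ k) := by ring
      _ ≤ t ^ k * c q * (1 / x ^ k) := by
          refine mul_le_mul_of_nonneg_left h9 ?_
          have := hcnonneg q
          positivity
      _ = c q / (2 * ((q : ℝ) + 1)) ^ k := by
          rw [hx]
          rw [show (2 * t * ((q : ℝ) + 1)) ^ k = t ^ k * (2 * ((q : ℝ) + 1)) ^ k from by
            rw [← mul_pow]; ring_nf]
          field_simp
  -- assemble via dominated convergence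
  have main := tendsto_tsum_of_dominated_convergence hgsum key hbound
  have hlim : ∑' q : ℕ, c q / (2 * ((q : ℝ) + 1)) ^ k
      = (1 / 2 ^ k) * ∑' q : ℕ, c q / ((q : ℝ) + 1) ^ k := by
    rw [← tsum_mul_left]
    refine tsum_congr (fun q => ?_)
    rw [mul_pow]
    rw [div_mul_eq_div_div_swap, one_div_mul_eq_div]
  rw [hlim] at main
  refine main.congr (fun t => ?_)
  exact tsum_mul_left
end

section
/- For integer n ≥ 2, lim_{t→0⁺} tⁿ · ∑_{q=1}^∞ ∑_{p=0}^∞ C(n+p-2, p) · C(n+q-2, q-1) · e^{-2tq(p+n-1)} = (1/2ⁿ) · ∑_{w=1}^∞ C(w-1, n-2)/wⁿ. -/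
open Filter Real Set

private lemma aux1 {x : ℝ} (hx : 0 ≤ x) : x / (1 + x) ≤ 1 - Real.exp (-x) := by
  have h0 : (0:ℝ) < 1 + x := by linarith
  have h1 : Real.exp (-x) ≤ 1 / (1 + x) := by
    rw [Real.exp_neg, one_div]
    exact inv_anti₀ h0 (by linarith [Real.add_one_le_exp x])
  have h2 : 1 - 1/(1+x) = x/(1+x) := by field_simp; ring
  linarith

private lemma aux2 (N : ℕ) {x : ℝ} (hx : 0 ≤ x) :
    Real.exp (-x) * (1+x)^N ≤ 2^N * (1 + (N.factorial : ℝ)) := by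
  have hxN : x^N * Real.exp (-x) ≤ (N.factorial : ℝ) := by
    have h := Real.sum_le_exp_of_nonneg hx (N+1)
    have h2 : x^N / (N.factorial : ℝ) ≤ Real.exp x :=
      le_trans (Finset.single_le_sum (f := fun i => x^i / (i.factorial : ℝ))
        (fun i _ => by positivity) (Finset.self_mem_range_succ N)) h
    have hNf : (0:ℝ) < (N.factorial : ℝ) := by positivity
    have h3 : x^N ≤ Real.exp x * (N.factorial : ℝ) := by
      rw [div_le_iff₀ hNf] at h2; linarith
    have hexp : Real.exp (-x) * Real.exp x = 1 := by
      rw [← Real.exp_add]; simp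
    nlinarith [Real.exp_pos (-x), mul_le_mul_of_nonneg_right h3 (Real.exp_pos (-x)).le]
  have hpow : (1+x)^N ≤ 2^N * (1 + x^N) := by
    rcases le_total x 1 with h | h
    · have h1 : (1+x)^N ≤ 2^N := pow_le_pow_left₀ (by linarith) (by linarith) N
      have h2 : (0:ℝ) ≤ x^N := by positivity
      nlinarith [pow_pos (show (0:ℝ) < 2 by norm_num) N]
    · have h1 : (1+x)^N ≤ (2*x)^N := pow_le_pow_left₀ (by linarith) (by linarith) N
      rw [mul_pow] at h1
      nlinarith [pow_pos (show (0:ℝ) < 2 by norm_num) N]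
  have he1 : Real.exp (-x) ≤ 1 := Real.exp_le_one_iff.mpr (by linarith)
  calc Real.exp (-x) * (1+x)^N ≤ Real.exp (-x) * (2^N * (1 + x^N)) :=
        mul_le_mul_of_nonneg_left hpow (Real.exp_pos _).le
    _ = 2^N * (Real.exp (-x) + x^N * Real.exp (-x)) := by ring
    _ ≤ 2^N * (1 + (N.factorial : ℝ)) := by
        have := add_le_add he1 hxN
        exact mul_le_mul_of_nonneg_left this (by positivity)

private noncomputable def auxF (m : ℕ) (t : ℝ) (p : ℕ) : ℝ :=
  ((p + m).choose m : ℝ) *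
    (Real.exp (-(2 * ((p:ℝ)+m+1) * t)) *
      (t / (1 - Real.exp (-(2 * ((p:ℝ)+m+1) * t)))) ^ (m+2))

private lemma auxlim (m p : ℕ) :
    Tendsto (fun t => auxF m t p) (nhdsWithin 0 (Set.Ioi 0))
      (nhds (((p + m).choose m : ℝ) * (1 * ((2 * ((p:ℝ)+m+1))⁻¹) ^ (m+2)))) := by
  set A : ℝ := 2 * ((p:ℝ)+m+1) with hA
  have hA0 : 0 < A := by positivity
  have hd : HasDerivAt (fun x : ℝ => 1 - Real.exp (-(A * x))) A 0 := by
    have h1 : HasDerivAt (fun x : ℝ => -(A * x)) (-A) 0 := by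
      have h := ((hasDerivAt_id (0:ℝ)).const_mul A).neg
      simp only [id, mul_one] at h
      exact h
    have h3 := (h1.exp).const_sub 1
    simpa using h3
  rw [hasDerivAt_iff_tendsto_slope] at hd
  have h4 : Tendsto (fun x : ℝ => (1 - Real.exp (-(A*x)))/x) (nhdsWithin 0 {(0:ℝ)}ᶜ) (nhds A) := by
    refine hd.congr fun x => ?_
    simp [slope_def_field]
  have h5 := h4.mono_left (nhdsWithin_mono 0 (fun x hx => ne_of_gt hx))
  have h6 : Tendsto (fun x => x / (1 - Real.exp (-(A*x)))) (nhdsWithin 0 (Set.Ioi 0)) (nhds A⁻¹) := by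
    have h := h5.inv₀ (ne_of_gt hA0)
    refine h.congr fun x => ?_
    rw [inv_div]
  have h7 : Tendsto (fun x : ℝ => Real.exp (-(A*x))) (nhdsWithin 0 (Set.Ioi 0)) (nhds 1) := by
    have hc : Continuous fun x : ℝ => Real.exp (-(A*x)) := by continuity
    have h := hc.tendsto 0
    simp only [mul_zero, neg_zero, Real.exp_zero] at h
    exact h.mono_left nhdsWithin_le_nhds
  exact tendsto_const_nhds.mul (h7.mul (h6.pow (m+2)))

private lemma auxbound (m p : ℕ) {t : ℝ} (ht : 0 < t) :
    ‖auxF m t p‖ ≤ ((p + m).choose m : ℝ) *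
      ((2^(m+2) * (1 + ((m+2).factorial : ℝ))) * ((2 * ((p:ℝ)+m+1))⁻¹) ^ (m+2)) := by
  set A : ℝ := 2 * ((p:ℝ)+m+1) with hA
  have hA0 : 0 < A := by positivity
  set y : ℝ := Real.exp (-(A * t)) with hy
  have hy0 : 0 < y := Real.exp_pos _
  have hy1 : y < 1 := Real.exp_lt_one_iff.mpr (by nlinarith)
  have h1y : 0 < 1 - y := by linarith
  have hx : 0 < A * t := by positivity
  have hFnn : 0 ≤ auxF m t p := by
    unfold auxF
    rw [← hA, ← hy]
    positivity
  rw [Real.norm_eq_abs, abs_of_nonneg hFnn]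
  unfold auxF
  rw [← hA, ← hy]
  have hb1 : (A*t)/(1+(A*t)) ≤ 1 - y := by
    have := aux1 (le_of_lt hx)
    rw [← hy] at this
    exact this
  have ht1y : t/(1-y) ≤ (1+(A*t))/A := by
    rw [div_le_div_iff₀ h1y hA0]
    have h := (div_le_iff₀ (show (0:ℝ) < 1 + A*t by positivity)).mp hb1
    nlinarith
  have key : y * (t/(1-y))^(m+2) ≤ (2^(m+2) * (1 + ((m+2).factorial : ℝ))) * (A⁻¹) ^ (m+2) := by
    calc y * (t/(1-y))^(m+2) ≤ y * ((1+A*t)/A)^(m+2) := by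
          refine mul_le_mul_of_nonneg_left (pow_le_pow_left₀ (by positivity) ht1y _) hy0.le
      _ = (y * (1+A*t)^(m+2)) * (A⁻¹) ^ (m+2) := by
          rw [div_pow, inv_pow]; ring
      _ ≤ (2^(m+2) * (1 + ((m+2).factorial : ℝ))) * (A⁻¹) ^ (m+2) := by
          refine mul_le_mul_of_nonneg_right ?_ (by positivity)
          simpa [hy] using aux2 (m+2) hx.le
  exact mul_le_mul_of_nonneg_left key (by positivity)

private lemma auxeq (m : ℕ) {t : ℝ} (ht : 0 < t) :
    t ^ (m+2) * ∑' q : ℕ, ∑' p : ℕ,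
        ((((m+2) + p - 2).choose p : ℝ) * (((m+2) + q - 1).choose q : ℝ)) *
          Real.exp (-2 * t * (q + 1) * (p + (m+2 : ℕ) - 1))
      = ∑' p : ℕ, auxF m t p := by
  set y : ℕ → ℝ := fun p => Real.exp (-(2 * ((p:ℝ)+m+1) * t)) with hy
  have hy0 : ∀ p, 0 < y p := fun p => Real.exp_pos _
  have hy1 : ∀ p, y p < 1 := fun p => Real.exp_lt_one_iff.mpr (neg_lt_zero.mpr (by positivity))
  have hyn : ∀ p, ‖y p‖ < 1 := fun p => by
    rw [Real.norm_eq_abs, abs_of_pos (hy0 p)]; exact hy1 p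
  set g : ℕ → ℕ → ℝ := fun p q =>
    (((p+m).choose m : ℝ) * y p) * ((((q+(m+1)).choose (m+1) : ℝ)) * (y p)^q) with hg
  have key : ∀ p q, ((((m+2) + p - 2).choose p : ℝ) * (((m+2) + q - 1).choose q : ℝ)) *
      Real.exp (-2 * t * ((q:ℝ) + 1) * ((p:ℝ) + ((m+2 : ℕ):ℝ) - 1)) = g p q := by
    intro p q
    have e1 : m+2 + p - 2 = p + m := by omega
    have e2 : m+2 + q - 1 = q + (m+1) := by omega
    have e3 : (-2 * t * ((q:ℝ) + 1) * ((p:ℝ) + ((m+2:ℕ):ℝ) - 1))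
        = ((q+1 : ℕ):ℝ) * (-(2 * ((p:ℝ)+m+1) * t)) := by push_cast; ring
    rw [e1, e2, e3, Real.exp_nat_mul, Nat.choose_symm_add (a := p) (b := m),
      Nat.choose_symm_add (a := q) (b := m+1), hg]
    simp only [hy]
    rw [pow_succ]
    ring
  have hsumq : ∀ p, Summable (g p) := fun p =>
    (summable_choose_mul_geometric_of_norm_lt_one (m+1) (hyn p)).mul_left _
  have htsq : ∀ p, ∑' q, g p q = ((p+m).choose m : ℝ) * (y p / (1 - y p)^(m+2)) := by
    intro p
    rw [hg]
    simp only
    rw [tsum_mul_left, tsum_choose_mul_geometric_of_norm_lt_one (m+1) (hyn p)]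
    have : (1 - y p) ^ (m + 1 + 1) = (1 - y p) ^ (m + 2) := rfl
    rw [this]
    ring
  -- summability over p of row sums
  set r : ℝ := Real.exp (-(2*t)) with hr
  have hr0 : 0 < r := Real.exp_pos _
  have hr1 : r < 1 := Real.exp_lt_one_iff.mpr (by linarith)
  have hrn : ‖r‖ < 1 := by rw [Real.norm_eq_abs, abs_of_pos hr0]; exact hr1
  have hypr : ∀ p, y p ≤ r ^ p := by
    intro p
    simp only [hy, hr]
    rw [← Real.exp_nat_mul]
    apply Real.exp_le_exp.mpr
    have h1 : (0:ℝ) ≤ (m:ℝ) * t := mul_nonneg (Nat.cast_nonneg m) ht.le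
    nlinarith [Nat.cast_nonneg (α := ℝ) p]
  have hypr1 : ∀ p, y p ≤ r := by
    intro p
    simp only [hy, hr]
    apply Real.exp_le_exp.mpr
    have h1 : (0:ℝ) ≤ (p:ℝ) * t := mul_nonneg (Nat.cast_nonneg p) ht.le
    have h2 : (0:ℝ) ≤ (m:ℝ) * t := mul_nonneg (Nat.cast_nonneg m) ht.le
    nlinarith
  have hS1 : Summable (fun p => ((p+m).choose m : ℝ) * (y p / (1 - y p)^(m+2))) := by
    refine Summable.of_nonneg_of_le (fun p => mul_nonneg (Nat.cast_nonneg _)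
      (div_nonneg (hy0 p).le (pow_nonneg (by linarith [hy1 p]) _))) (fun p => ?_)
      (((summable_choose_mul_geometric_of_norm_lt_one m hrn).mul_left
        ((1/(1-r)^(m+2)))))
    have hd : y p / (1 - y p)^(m+2) ≤ r^p / (1-r)^(m+2) := by
      refine div_le_div₀ (by positivity) (hypr p) (pow_pos (by linarith) _) ?_
      exact pow_le_pow_left₀ (by linarith) (by linarith [hypr1 p]) _
    calc ((p+m).choose m : ℝ) * (y p / (1 - y p)^(m+2))
        ≤ ((p+m).choose m : ℝ) * (r^p / (1-r)^(m+2)) :=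
          mul_le_mul_of_nonneg_left hd (by positivity)
      _ = 1/(1-r)^(m+2) * (((p+m).choose m : ℝ) * r^p) := by ring
  have hsump : Summable (fun p => ∑' q, g p q) :=
    hS1.congr (fun p => (htsq p).symm)
  have hunc : Summable (Function.uncurry g) := by
    refine (summable_prod_of_nonneg ?_).mpr ⟨fun p => hsumq p, hsump⟩
    intro x
    simp only [Function.uncurry, hg]
    positivity
  calc t ^ (m+2) * ∑' q : ℕ, ∑' p : ℕ,
        ((((m+2) + p - 2).choose p : ℝ) * (((m+2) + q - 1).choose q : ℝ)) *
          Real.exp (-2 * t * (q + 1) * (p + (m+2 : ℕ) - 1))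
      = t ^ (m+2) * ∑' q : ℕ, ∑' p : ℕ, g p q := by
        congr 1
        exact tsum_congr fun q => tsum_congr fun p => key p q
    _ = t ^ (m+2) * ∑' p : ℕ, ∑' q : ℕ, g p q := by rw [Summable.tsum_comm hunc]
    _ = t ^ (m+2) * ∑' p : ℕ, ((p+m).choose m : ℝ) * (y p / (1 - y p)^(m+2)) := by
        rw [tsum_congr htsq]
    _ = ∑' p : ℕ, t ^ (m+2) * (((p+m).choose m : ℝ) * (y p / (1 - y p)^(m+2))) := by
        rw [← tsum_mul_left]
    _ = ∑' p : ℕ, auxF m t p := by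
        refine tsum_congr fun p => ?_
        unfold auxF
        have h1y : (0:ℝ) < 1 - y p := by linarith [hy1 p]
        have hyp : Real.exp (-(2 * ((p:ℝ) + m + 1) * t)) = y p := rfl
        rw [hyp, div_pow]
        field_simp

private lemma hsumf (m : ℕ) :
    Summable (fun w : ℕ => (w.choose m : ℝ) / ((w:ℝ)+1)^(m+2)) := by
  have hs2 : Summable (fun w : ℕ => 1/((w:ℝ)+1)^2) := by
    have h := (summable_nat_add_iff (f := fun n : ℕ => 1/(n:ℝ)^2) 1).mpr
      (summable_one_div_nat_pow.mpr one_lt_two)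
    simpa using h
  refine Summable.of_nonneg_of_le (fun w => by positivity) (fun w => ?_) hs2
  have hw1 : (0:ℝ) < (w:ℝ)+1 := by positivity
  have hcb : (w.choose m : ℝ) ≤ ((w:ℝ)+1)^m := by
    calc (w.choose m : ℝ) ≤ ((w:ℝ))^m := by
          exact_mod_cast Nat.cast_le.mpr (Nat.choose_le_pow w m)
      _ ≤ ((w:ℝ)+1)^m := pow_le_pow_left₀ (by positivity) (by linarith) _
  calc (w.choose m : ℝ) / ((w:ℝ)+1)^(m+2) ≤ ((w:ℝ)+1)^m / ((w:ℝ)+1)^(m+2) := by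
        gcongr
    _ = 1/((w:ℝ)+1)^2 := by
        rw [pow_add]
        field_simp

private lemma hsumB (m : ℕ) :
    Summable (fun p : ℕ => ((p + m).choose m : ℝ) *
      ((2^(m+2) * (1 + ((m+2).factorial : ℝ))) * ((2 * ((p:ℝ)+m+1))⁻¹) ^ (m+2))) := by
  have h := ((summable_nat_add_iff (f := fun w : ℕ => (w.choose m : ℝ) / ((w:ℝ)+1)^(m+2)) m).mpr
    (hsumf m)).mul_left ((2^(m+2) * (1 + ((m+2).factorial : ℝ))) / 2^(m+2))
  refine h.congr fun p => ?_
  have hP : (0:ℝ) < (p:ℝ)+m+1 := by positivity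
  have hc : (((p+m : ℕ) : ℝ)+1) = (p:ℝ)+m+1 := by push_cast; ring
  simp only [hc]
  rw [inv_pow, mul_pow]
  field_simp

private lemma auxval (m : ℕ) :
    ∑' p : ℕ, (((p + m).choose m : ℝ) * (1 * ((2 * ((p:ℝ)+m+1))⁻¹) ^ (m+2)))
      = (1/2^(m+2)) * ∑' w : ℕ, (w.choose m : ℝ) / ((w:ℝ)+1)^(m+2) := by
  have hshift := Summable.sum_add_tsum_nat_add (f := fun w : ℕ => (w.choose m : ℝ) / ((w:ℝ)+1)^(m+2)) m
    (hsumf m)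
  have hzero : (∑ i ∈ Finset.range m, (i.choose m : ℝ) / ((i:ℝ)+1)^(m+2)) = 0 := by
    refine Finset.sum_eq_zero fun i hi => ?_
    rw [Nat.choose_eq_zero_of_lt (Finset.mem_range.mp hi)]
    simp
  rw [hzero, zero_add] at hshift
  rw [← hshift, ← tsum_mul_left]
  refine tsum_congr fun p => ?_
  have hP : (0:ℝ) < (p:ℝ)+m+1 := by positivity
  have hc : (((p+m : ℕ) : ℝ)+1) = (p:ℝ)+m+1 := by push_cast; ring
  simp only [hc]
  rw [inv_pow, mul_pow]
  field_simp


theorem stmt5 (n : ℕ) (hn : 2 ≤ n) :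
    Tendsto (fun t : ℝ => t ^ n * ∑' q : ℕ, ∑' p : ℕ,
        (((n + p - 2).choose p : ℝ) * ((n + q - 1).choose q : ℝ)) *
          Real.exp (-2 * t * (q + 1) * (p + n - 1)))
      (nhdsWithin 0 (Set.Ioi 0))
      (nhds ((1 / 2 ^ n) * ∑' w : ℕ, (w.choose (n - 2) : ℝ) / (w + 1 : ℝ) ^ n)) := by
  obtain ⟨m, rfl⟩ : ∃ m, n = m + 2 := ⟨n - 2, by omega⟩
  have hbd : ∀ᶠ t in nhdsWithin (0:ℝ) (Set.Ioi 0), ∀ p, ‖auxF m t p‖ ≤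
      ((p + m).choose m : ℝ) *
        ((2^(m+2) * (1 + ((m+2).factorial : ℝ))) * ((2 * ((p:ℝ)+m+1))⁻¹) ^ (m+2)) :=
    eventually_mem_nhdsWithin.mono (fun t ht p => auxbound m p ht)
  have hmain := tendsto_tsum_of_dominated_convergence (hsumB m) (auxlim m) hbd
  rw [auxval m] at hmain
  simp only [Nat.add_sub_cancel]
  refine Tendsto.congr' ?_ hmain
  filter_upwards [self_mem_nhdsWithin] with t ht
  exact (auxeq m ht).symm
end

section
/- For integer n ≥ 2 and integer k with 0 ≤ k < n-1, lim_{t→0⁺} tⁿ · ∑_{w=n-1}^∞ w^k · (1/(1-e^{-2tw})^{n-1} - 1) = 0. -/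
open Filter Real Set

lemma aux_pow_bound (m : ℕ) (hm : 1 ≤ m) (x : ℝ) (hx : 0 < x) :
    1 / (1 - Real.exp (-x)) ^ m - 1 ≤
      (m : ℝ) * (2 ^ m * (m.factorial * 2 ^ m + 1)) * Real.exp (-x / 2) / x ^ m := by
  have he : Real.exp (-x) < 1 := Real.exp_lt_one_iff.2 (by linarith)
  have hep : 0 < Real.exp (-x) := Real.exp_pos _
  have hd : 0 < 1 - Real.exp (-x) := by linarith
  set a : ℝ := 1 / (1 - Real.exp (-x)) with ha_def
  have ha1 : 1 ≤ a := by
    rw [ha_def, le_div_iff₀ hd]; linarith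
  have ha0 : 0 ≤ a := le_trans zero_le_one ha1
  have henx : Real.exp (-x) ≤ 1 / (x + 1) := by
    have h1 : x + 1 ≤ Real.exp x := Real.add_one_le_exp x
    rw [Real.exp_neg, ← one_div]
    exact one_div_le_one_div_of_le (by linarith) h1
  have ha_le : a ≤ (x + 1) / x := by
    rw [ha_def, div_le_div_iff₀ hd hx]
    have h2 : (x + 1) * Real.exp (-x) ≤ (x + 1) * (1 / (x + 1)) :=
      mul_le_mul_of_nonneg_left henx (by linarith)
    have h3 : (x + 1) * (1 / (x + 1)) = 1 := by field_simp
    nlinarith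
  have ha_sub : a - 1 ≤ (x + 1) / x * Real.exp (-x) := by
    have key : a - 1 = a * Real.exp (-x) := by
      rw [ha_def]; field_simp; ring
    rw [key]
    exact mul_le_mul_of_nonneg_right ha_le (le_of_lt hep)
  have hgeom : a ^ m - 1 ≤ (m : ℝ) * a ^ (m - 1) * (a - 1) := by
    have h := geom_sum_mul a m
    have hsum : (∑ i ∈ Finset.range m, a ^ i) ≤ (m : ℝ) * a ^ (m - 1) := by
      calc (∑ i ∈ Finset.range m, a ^ i) ≤ ∑ _i ∈ Finset.range m, a ^ (m - 1) := by
            apply Finset.sum_le_sum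
            intro i hi
            have := Finset.mem_range.1 hi
            exact pow_le_pow_right₀ ha1 (by omega)
      _ = (m : ℝ) * a ^ (m - 1) := by
            rw [Finset.sum_const, Finset.card_range, nsmul_eq_mul]
    calc a ^ m - 1 = (∑ i ∈ Finset.range m, a ^ i) * (a - 1) := h.symm
      _ ≤ (m : ℝ) * a ^ (m - 1) * (a - 1) :=
          mul_le_mul_of_nonneg_right hsum (by linarith)
  have hxm : (0:ℝ) < x ^ m := pow_pos hx m
  have hx1 : (0:ℝ) < (x + 1) / x := by positivity
  have hm1 : m - 1 + 1 = m := by omega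
  have hpow_x : x ^ m ≤ (m.factorial : ℝ) * 2 ^ m * Real.exp (x / 2) := by
    have h := Real.pow_div_factorial_le_exp (x := x / 2) (by positivity) m
    have h2 : (x / 2) ^ m = x ^ m / 2 ^ m := by rw [div_pow]
    rw [h2] at h
    have hf : (0:ℝ) < (m.factorial : ℝ) := by positivity
    rw [div_div, div_le_iff₀ (by positivity)] at h
    calc x ^ m ≤ Real.exp (x/2) * (2 ^ m * m.factorial) := h
      _ = (m.factorial : ℝ) * 2 ^ m * Real.exp (x / 2) := by ring
  have hbin : (x + 1) ^ m ≤ 2 ^ m * (x ^ m + 1) := by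
    rcases le_or_gt x 1 with hc | hc
    · calc (x + 1) ^ m ≤ 2 ^ m := by
            apply pow_le_pow_left₀ (by linarith) (by linarith)
      _ ≤ 2 ^ m * (x ^ m + 1) := by nlinarith [pow_pos hx m, pow_pos (zero_lt_two (α := ℝ)) m]
    · calc (x + 1) ^ m ≤ (2 * x) ^ m := by
            apply pow_le_pow_left₀ (by linarith) (by linarith)
      _ = 2 ^ m * x ^ m := mul_pow 2 x m
      _ ≤ 2 ^ m * (x ^ m + 1) := by
            have : (0:ℝ) < 2 ^ m := by positivity
            nlinarith
  have hexp_comb : Real.exp (x / 2) * Real.exp (-x) = Real.exp (-x / 2) := by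
    rw [← Real.exp_add]; ring_nf
  calc 1 / (1 - Real.exp (-x)) ^ m - 1 = a ^ m - 1 := by
        rw [ha_def, div_pow, one_pow]
    _ ≤ (m : ℝ) * a ^ (m - 1) * (a - 1) := hgeom
    _ ≤ (m : ℝ) * ((x + 1) / x) ^ (m - 1) * ((x + 1) / x * Real.exp (-x)) := by
        apply mul_le_mul
        · exact mul_le_mul_of_nonneg_left (pow_le_pow_left₀ ha0 ha_le _) (by positivity)
        · exact ha_sub
        · linarith
        · positivity
    _ = (m : ℝ) * ((x + 1) / x) ^ m * Real.exp (-x) := by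
        have hp : ((x+1)/x) ^ (m-1) * ((x+1)/x) = ((x+1)/x) ^ m := by
          rw [← pow_succ, hm1]
        rw [← hp]; ring
    _ = (m : ℝ) * ((x + 1) ^ m * Real.exp (-x)) / x ^ m := by
        rw [div_pow]; ring
    _ ≤ (m : ℝ) * (2 ^ m * (x ^ m + 1) * Real.exp (-x)) / x ^ m := by
        gcongr
    _ ≤ (m : ℝ) * (2 ^ m * ((m.factorial : ℝ) * 2 ^ m * Real.exp (x / 2) + Real.exp (x / 2)) * Real.exp (-x)) / x ^ m := by
        gcongr <;> first
          | exact hpow_x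
          | exact Real.one_le_exp (by positivity)
    _ = (m : ℝ) * (2 ^ m * ((m.factorial : ℝ) * 2 ^ m + 1)) * (Real.exp (x / 2) * Real.exp (-x)) / x ^ m := by
        ring
    _ = (m : ℝ) * (2 ^ m * ((m.factorial : ℝ) * 2 ^ m + 1)) * Real.exp (-x / 2) / x ^ m := by
        rw [hexp_comb]

lemma aux_exp_sqrt (x : ℝ) (hx : 0 < x) : Real.exp (-x / 2) ≤ 1 / Real.sqrt x := by
  have h1 : Real.exp (-x / 2) ^ 2 = Real.exp (-x) := by
    rw [sq, ← Real.exp_add]; congr 1; ring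
  have h2 : Real.exp (-x) ≤ 1 / x := by
    rw [Real.exp_neg, ← one_div]
    exact one_div_le_one_div_of_le hx (by linarith [Real.add_one_le_exp x])
  have h3 : Real.exp (-x / 2) ≤ Real.sqrt (1 / x) :=
    Real.le_sqrt_of_sq_le (by rw [h1]; exact h2)
  rwa [one_div, Real.sqrt_inv, ← one_div] at h3

theorem stmt14 (n : ℕ) (hn : 2 ≤ n) (k : ℕ) (hk : k < n - 1) :
    Tendsto (fun t : ℝ => t ^ n * ∑' w : ℕ,
        ((w : ℝ) + n - 1) ^ k *
          (1 / (1 - Real.exp (-2 * t * ((w : ℝ) + n - 1))) ^ (n - 1) - 1))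
      (nhdsWithin 0 (Set.Ioi 0)) (nhds 0) := by
  set m := n - 1 with hm_def
  have hm : 1 ≤ m := by omega
  have hnm : n = m + 1 := by omega
  have hkm : k ≤ m - 1 := by omega
  set C : ℝ := (m : ℝ) * (2 ^ m * (m.factorial * 2 ^ m + 1)) with hC_def
  have hC0 : 0 ≤ C := by positivity
  -- summable majorant
  have hb : Summable (fun w : ℕ => 1 / (((w : ℝ) + 1) * Real.sqrt ((w : ℝ) + 1))) := by
    have h1 : Summable (fun w : ℕ => (((w : ℝ) + 1) ^ ((3:ℝ)/2))⁻¹) := by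
      have h2 : Summable (fun w : ℕ => (((w : ℝ)) ^ ((3:ℝ)/2))⁻¹) :=
        Real.summable_nat_rpow_inv.2 (by norm_num)
      have := (summable_nat_add_iff 1).2 h2
      apply this.congr
      intro w; push_cast; ring_nf
    apply h1.congr
    intro w
    have hp : (0:ℝ) < (w : ℝ) + 1 := by positivity
    rw [show (3:ℝ)/2 = 1 + 1/2 by norm_num, Real.rpow_add hp, Real.rpow_one,
      ← Real.sqrt_eq_rpow, one_div]
  set B : ℝ := ∑' w : ℕ, 1 / (((w : ℝ) + 1) * Real.sqrt ((w : ℝ) + 1)) with hB_def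
  have hB0 : 0 ≤ B := tsum_nonneg (fun w => by positivity)
  -- squeeze
  apply squeeze_zero' (g := fun t : ℝ => C * B * Real.sqrt t)
  · filter_upwards [self_mem_nhdsWithin] with t ht
    have ht0 : 0 < t := ht
    apply mul_nonneg (by positivity)
    apply tsum_nonneg
    intro w
    have hw2 : (2:ℝ) ≤ (n : ℝ) := by exact_mod_cast hn
    have hv1 : (1:ℝ) ≤ (w : ℝ) + n - 1 := by
      have : (0:ℝ) ≤ (w : ℝ) := Nat.cast_nonneg w
      linarith
    have hx : (0:ℝ) < 2 * t * ((w : ℝ) + n - 1) := by positivity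
    have he : Real.exp (-2 * t * ((w : ℝ) + n - 1)) < 1 := by
      rw [Real.exp_lt_one_iff]; nlinarith
    have hep : 0 < Real.exp (-2 * t * ((w : ℝ) + n - 1)) := Real.exp_pos _
    have hd : 0 < 1 - Real.exp (-2 * t * ((w : ℝ) + n - 1)) := by linarith
    have hd1 : (1 - Real.exp (-2 * t * ((w : ℝ) + n - 1))) ^ m ≤ 1 :=
      pow_le_one₀ hd.le (by linarith)
    have : 1 ≤ 1 / (1 - Real.exp (-2 * t * ((w : ℝ) + n - 1))) ^ m := by
      rw [le_div_iff₀ (pow_pos hd m)]; linarith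
    have hvk : (0:ℝ) ≤ ((w : ℝ) + n - 1) ^ k := by positivity
    nlinarith
  · filter_upwards [self_mem_nhdsWithin] with t ht
    have ht0 : 0 < t := ht
    have hst : 0 < Real.sqrt t := Real.sqrt_pos.2 ht0
    have hA : 0 < t ^ m * Real.sqrt t := by positivity
    have hw2 : (2:ℝ) ≤ (n : ℝ) := by exact_mod_cast hn
    -- per-term bound
    have hterm_le : ∀ w : ℕ,
        ((w : ℝ) + n - 1) ^ k *
          (1 / (1 - Real.exp (-2 * t * ((w : ℝ) + n - 1))) ^ m - 1) ≤
        C / (t ^ m * Real.sqrt t) * (1 / (((w : ℝ) + 1) * Real.sqrt ((w : ℝ) + 1))) := by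
      intro w
      set v : ℝ := (w : ℝ) + n - 1 with hv_def
      have hw0 : (0:ℝ) ≤ (w : ℝ) := Nat.cast_nonneg w
      have hv1 : (1:ℝ) ≤ v := by rw [hv_def]; linarith
      have hv0 : (0:ℝ) < v := by linarith
      have hwv : (w : ℝ) + 1 ≤ v := by rw [hv_def]; linarith
      have hx : (0:ℝ) < 2 * t * v := by positivity
      have hxe : -2 * t * v = -(2 * t * v) := by ring
      have h1 : 1 / (1 - Real.exp (-(2 * t * v))) ^ m - 1 ≤
          C * Real.exp (-(2 * t * v) / 2) / (2 * t * v) ^ m :=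
        aux_pow_bound m hm (2 * t * v) hx
      have h2 : Real.exp (-(2 * t * v) / 2) ≤ 1 / Real.sqrt (2 * t * v) :=
        aux_exp_sqrt (2 * t * v) hx
      have hden : (t ^ m * v ^ m) * (Real.sqrt t * Real.sqrt v) ≤
          (2 * t * v) ^ m * Real.sqrt (2 * t * v) := by
        apply mul_le_mul
        · calc t ^ m * v ^ m = (t * v) ^ m := (mul_pow t v m).symm
            _ ≤ (2 * t * v) ^ m := by
                apply pow_le_pow_left₀ (by positivity) (by nlinarith)
        · calc Real.sqrt t * Real.sqrt v = Real.sqrt (t * v) := (Real.sqrt_mul ht0.le v).symm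
            _ ≤ Real.sqrt (2 * t * v) := Real.sqrt_le_sqrt (by nlinarith)
        · positivity
        · positivity
      have hlast : v ^ k / (v ^ m * Real.sqrt v) ≤
          1 / (((w : ℝ) + 1) * Real.sqrt ((w : ℝ) + 1)) := by
        rw [div_le_div_iff₀ (by positivity) (by positivity)]
        have e1 : v ^ k ≤ v ^ (m - 1) := pow_le_pow_right₀ hv1 hkm
        have e2 : Real.sqrt ((w : ℝ) + 1) ≤ Real.sqrt v := Real.sqrt_le_sqrt hwv
        calc v ^ k * (((w : ℝ) + 1) * Real.sqrt ((w : ℝ) + 1))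
            ≤ v ^ (m - 1) * (v * Real.sqrt v) := by
              apply mul_le_mul e1 (mul_le_mul hwv e2 (Real.sqrt_nonneg _) hv0.le)
                (by positivity) (by positivity)
          _ = v ^ (m - 1) * v * Real.sqrt v := by ring
          _ = v ^ m * Real.sqrt v := by
              rw [← pow_succ]
              congr 2
              omega
          _ = 1 * (v ^ m * Real.sqrt v) := by ring
      calc v ^ k * (1 / (1 - Real.exp (-2 * t * v)) ^ m - 1)
          = v ^ k * (1 / (1 - Real.exp (-(2 * t * v))) ^ m - 1) := by rw [hxe]
        _ ≤ v ^ k * (C * Real.exp (-(2 * t * v) / 2) / (2 * t * v) ^ m) := by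
            apply mul_le_mul_of_nonneg_left h1 (by positivity)
        _ ≤ v ^ k * (C * (1 / Real.sqrt (2 * t * v)) / (2 * t * v) ^ m) := by
            gcongr
        _ = C * (v ^ k / ((2 * t * v) ^ m * Real.sqrt (2 * t * v))) := by
            ring
        _ ≤ C * (v ^ k / ((t ^ m * v ^ m) * (Real.sqrt t * Real.sqrt v))) := by
            have hnum : (0:ℝ) ≤ v ^ k := pow_nonneg hv0.le k
            have hpos : (0:ℝ) < (t ^ m * v ^ m) * (Real.sqrt t * Real.sqrt v) := by positivity
            exact mul_le_mul_of_nonneg_left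
              (div_le_div_of_nonneg_left hnum hpos hden) hC0
        _ = C / (t ^ m * Real.sqrt t) * (v ^ k / (v ^ m * Real.sqrt v)) := by
            ring
        _ ≤ C / (t ^ m * Real.sqrt t) * (1 / (((w : ℝ) + 1) * Real.sqrt ((w : ℝ) + 1))) := by
            apply mul_le_mul_of_nonneg_left hlast (by positivity)
    -- nonnegativity of each term
    have hterm_nonneg : ∀ w : ℕ, 0 ≤ ((w : ℝ) + n - 1) ^ k *
        (1 / (1 - Real.exp (-2 * t * ((w : ℝ) + n - 1))) ^ m - 1) := by
      intro w
      have hw0 : (0:ℝ) ≤ (w : ℝ) := Nat.cast_nonneg w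
      have hv1 : (1:ℝ) ≤ (w : ℝ) + n - 1 := by linarith
      have hx : (0:ℝ) < 2 * t * ((w : ℝ) + n - 1) := by positivity
      have he : Real.exp (-2 * t * ((w : ℝ) + n - 1)) < 1 := by
        rw [Real.exp_lt_one_iff]; nlinarith
      have hep : 0 < Real.exp (-2 * t * ((w : ℝ) + n - 1)) := Real.exp_pos _
      have hd : 0 < 1 - Real.exp (-2 * t * ((w : ℝ) + n - 1)) := by linarith
      have hd1 : (1 - Real.exp (-2 * t * ((w : ℝ) + n - 1))) ^ m ≤ 1 :=
        pow_le_one₀ hd.le (by linarith)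
      have h1 : 1 ≤ 1 / (1 - Real.exp (-2 * t * ((w : ℝ) + n - 1))) ^ m := by
        rw [le_div_iff₀ (pow_pos hd m)]; linarith
      have hvk : (0:ℝ) ≤ ((w : ℝ) + n - 1) ^ k := pow_nonneg (by linarith) k
      exact mul_nonneg hvk (by linarith)
    have hgsum : Summable (fun w : ℕ =>
        C / (t ^ m * Real.sqrt t) * (1 / (((w : ℝ) + 1) * Real.sqrt ((w : ℝ) + 1)))) :=
      hb.mul_left _
    have hsum_le : (∑' w : ℕ, ((w : ℝ) + n - 1) ^ k *
          (1 / (1 - Real.exp (-2 * t * ((w : ℝ) + n - 1))) ^ m - 1)) ≤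
        C / (t ^ m * Real.sqrt t) * B := by
      have hfs : Summable (fun w : ℕ => ((w : ℝ) + n - 1) ^ k *
          (1 / (1 - Real.exp (-2 * t * ((w : ℝ) + n - 1))) ^ m - 1)) :=
        Summable.of_nonneg_of_le hterm_nonneg hterm_le hgsum
      calc (∑' w : ℕ, ((w : ℝ) + n - 1) ^ k *
            (1 / (1 - Real.exp (-2 * t * ((w : ℝ) + n - 1))) ^ m - 1))
          ≤ ∑' w : ℕ, C / (t ^ m * Real.sqrt t) *
              (1 / (((w : ℝ) + 1) * Real.sqrt ((w : ℝ) + 1))) :=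
            Summable.tsum_le_tsum hterm_le hfs hgsum
        _ = C / (t ^ m * Real.sqrt t) * B := by rw [hB_def, tsum_mul_left]
    calc t ^ n * ∑' w : ℕ, ((w : ℝ) + n - 1) ^ k *
          (1 / (1 - Real.exp (-2 * t * ((w : ℝ) + n - 1))) ^ m - 1)
        ≤ t ^ n * (C / (t ^ m * Real.sqrt t) * B) := by
          apply mul_le_mul_of_nonneg_left hsum_le (by positivity)
      _ = C * B * (t ^ n / (t ^ m * Real.sqrt t)) := by ring
      _ = C * B * Real.sqrt t := by
          have h1 : Real.sqrt t * Real.sqrt t = t := Real.mul_self_sqrt ht0.le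
          have h3 : t ^ m * t = Real.sqrt t * (t ^ m * Real.sqrt t) := by
            calc t ^ m * t = t ^ m * (Real.sqrt t * Real.sqrt t) := by rw [h1]
              _ = Real.sqrt t * (t ^ m * Real.sqrt t) := by ring
          have h2 : t ^ n / (t ^ m * Real.sqrt t) = Real.sqrt t := by
            rw [div_eq_iff (ne_of_gt hA), hnm, pow_succ]
            exact h3
          rw [h2]
  · have h0 : Tendsto (fun t : ℝ => Real.sqrt t) (nhdsWithin 0 (Set.Ioi 0)) (nhds 0) := by
      have := (Real.continuous_sqrt.tendsto 0).mono_left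
        (nhdsWithin_le_nhds (s := Set.Ioi (0:ℝ)))
      simpa using this
    have := h0.const_mul (C * B)
    simpa using this
end

section
/- For integer n ≥ 2, lim_{t→0⁺} tⁿ · ∑_{q=1}^∞ q^{n-1} · e^{-2tq(n-1)}/(1-e^{-2tq})^{n-1} = ∫₀^∞ x^{n-1} e^{-2x(n-1)}/(1-e^{-2x})^{n-1} dx. -/
open Filter Real Set MeasureTheory


-- basic facts about g x = x / (exp (2x) - 1)
lemma stmt17aux_exp_pos {x : ℝ} (hx : 0 < x) : 0 < Real.exp (2*x) - 1 := by
  have : (1:ℝ) < Real.exp (2*x) := by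
    rw [← Real.exp_zero]
    exact Real.exp_lt_exp.mpr (by linarith)
  linarith

lemma stmt17aux_g_pos {x : ℝ} (hx : 0 < x) : 0 < x / (Real.exp (2*x) - 1) :=
  div_pos hx (stmt17aux_exp_pos hx)

lemma stmt17aux_g_le_half {x : ℝ} (hx : 0 < x) : x / (Real.exp (2*x) - 1) ≤ 1/2 := by
  have h := Real.add_one_le_exp (2*x)
  rw [div_le_iff₀ (stmt17aux_exp_pos hx)]
  linarith

lemma stmt17aux_g_le_exp {x : ℝ} (hx : 0 < x) :
    x / (Real.exp (2*x) - 1) ≤ Real.exp (-x) / 2 := by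
  have hs : x < Real.sinh x := Real.self_lt_sinh_iff.mpr hx
  rw [Real.sinh_eq] at hs
  have hkey : 2 * x * Real.exp x ≤ Real.exp (2*x) - 1 := by
    have h1 : Real.exp x * Real.exp x = Real.exp (2*x) := by
      rw [← Real.exp_add]; ring_nf
    have h2 : Real.exp x * Real.exp (-x) = 1 := by
      rw [← Real.exp_add]; simp
    nlinarith [Real.exp_pos x]
  have h0 : 0 < 2 * x * Real.exp x := by positivity
  calc x / (Real.exp (2*x) - 1) ≤ x / (2 * x * Real.exp x) :=
        div_le_div_of_nonneg_left hx.le h0 hkey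
    _ = Real.exp (-x) / 2 := by
        rw [Real.exp_neg]; field_simp

lemma stmt17aux_g_anti : AntitoneOn (fun x : ℝ => x / (Real.exp (2*x) - 1)) (Ioi 0) := by
  intro a ha b hb hab
  simp only [mem_Ioi] at ha hb
  rcases eq_or_lt_of_le hab with rfl | hab; · exact le_refl _
  have hsec := (convexOn_exp).secant_mono (a := 0) (x := 2*a) (y := 2*b)
    (mem_univ _) (mem_univ _) (mem_univ _) (by positivity) (by positivity) (by linarith)
  simp only [Real.exp_zero, sub_zero] at hsec
  have hEa := stmt17aux_exp_pos ha
  have hEb := stmt17aux_exp_pos hb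
  rw [div_le_div_iff₀ hEb hEa]
  rw [div_le_div_iff₀ (by linarith : (0:ℝ) < 2*a) (by linarith : (0:ℝ) < 2*b)] at hsec
  nlinarith

lemma stmt17aux_F_anti (k : ℕ) :
    AntitoneOn (fun x : ℝ => (x / (Real.exp (2*x) - 1))^k) (Ioi 0) := by
  intro a ha b hb hab
  exact pow_le_pow_left₀ (stmt17aux_g_pos hb).le (stmt17aux_g_anti ha hb hab) k

lemma stmt17aux_F_le_exp {k : ℕ} (hk : 1 ≤ k) {x : ℝ} (hx : 0 < x) :
    (x / (Real.exp (2*x) - 1))^k ≤ Real.exp (-x) := by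
  have h1 : (x / (Real.exp (2*x) - 1))^k ≤ (Real.exp (-x))^k :=
    pow_le_pow_left₀ (stmt17aux_g_pos hx).le
      (le_trans (stmt17aux_g_le_exp hx) (by linarith [Real.exp_pos (-x)])) k
  refine h1.trans (pow_le_of_le_one (Real.exp_pos _).le ?_ (by omega))
  rw [← Real.exp_zero]
  exact Real.exp_le_exp.mpr (by linarith)

lemma stmt17aux_F_le_half {k : ℕ} (hk : 1 ≤ k) {x : ℝ} (hx : 0 < x) :
    (x / (Real.exp (2*x) - 1))^k ≤ 1/2 := by
  have h1 : (x / (Real.exp (2*x) - 1))^k ≤ (1/2:ℝ)^k :=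
    pow_le_pow_left₀ (stmt17aux_g_pos hx).le (stmt17aux_g_le_half hx) k
  refine h1.trans (pow_le_of_le_one (by norm_num) (by norm_num) (by omega))

lemma stmt17aux_F_meas (k : ℕ) :
    Measurable (fun x : ℝ => (x / (Real.exp (2*x) - 1))^k) := by
  exact (measurable_id.div ((Real.measurable_exp.comp (measurable_const_mul 2)).sub
    measurable_const)).pow_const k

lemma stmt17aux_F_int {k : ℕ} (hk : 1 ≤ k) :
    IntegrableOn (fun x : ℝ => (x / (Real.exp (2*x) - 1))^k) (Ioi 0) := by
  refine ((exp_neg_integrableOn_Ioi 0 one_pos).mono'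
    ((stmt17aux_F_meas k).aestronglyMeasurable) ?_)
  rw [ae_restrict_iff' measurableSet_Ioi]
  filter_upwards with x hx
  rw [Real.norm_eq_abs, abs_of_nonneg (pow_nonneg (stmt17aux_g_pos (mem_Ioi.mp hx)).le k)]
  simpa using stmt17aux_F_le_exp hk hx

lemma stmt17aux_identity {x : ℝ} (hx : 0 < x) (k : ℕ) :
    x ^ k * Real.exp (-2 * x * k) / (1 - Real.exp (-2 * x)) ^ k
      = (x / (Real.exp (2*x) - 1))^k := by
  have h0 : 0 < 1 - Real.exp (-2*x) := by
    have : Real.exp (-2*x) < 1 := by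
      rw [← Real.exp_zero]; exact Real.exp_lt_exp.mpr (by linarith)
    linarith
  have hE : Real.exp (2*x) - 1 = Real.exp (2*x) * (1 - Real.exp (-2*x)) := by
    rw [mul_sub, ← Real.exp_add]; ring_nf; rw [Real.exp_zero]; ring
  have harg : -2 * x * (k:ℝ) = -((k:ℕ) * (2*x)) := by push_cast; ring
  rw [div_pow, hE, mul_pow, ← Real.exp_nat_mul, harg, Real.exp_neg]
  have hexp : Real.exp ((k:ℕ) * (2*x)) ≠ 0 := (Real.exp_pos _).ne'
  have hne : (1 - Real.exp (-2*x))^k ≠ 0 := pow_ne_zero _ h0.ne'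
  field_simp

lemma stmt17aux_union (t : ℝ) (ht : 0 < t) (m : ℕ) :
    (⋃ q : ℕ, Ioc (t*(q+m)) (t*(q+m+1))) = Ioi (t*m) := by
  ext x
  simp only [mem_iUnion, mem_Ioc, mem_Ioi]
  constructor
  · rintro ⟨q, h1, h2⟩
    have : t*(m:ℝ) ≤ t*((q:ℝ)+m) := by
      have hq0 : (0:ℝ) ≤ (q:ℝ) := Nat.cast_nonneg q
      have : (m:ℝ) ≤ (q:ℝ)+m := by linarith
      nlinarith
    linarith
  · intro hx
    set p := ⌈x/t⌉₊ with hp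
    have hxt : (m:ℝ) < x/t := by
      rw [lt_div_iff₀ ht]; nlinarith
    have hmp : m < p := Nat.lt_ceil.mpr hxt
    have hle : x/t ≤ (p:ℝ) := Nat.le_ceil _
    have hgt : ((p:ℝ) - 1) < x/t := by
      by_contra hcon
      push_neg at hcon
      have h1p : 1 ≤ p := by omega
      have : p ≤ p - 1 := Nat.ceil_le.mpr (by push_cast [h1p]; linarith)
      omega
    refine ⟨p - m - 1, ?_, ?_⟩
    · have hcast : ((p - m - 1 : ℕ) : ℝ) + m = (p:ℝ) - 1 := by
        have : (p - m - 1) + m + 1 = p := by omega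
        have := congrArg (Nat.cast (R := ℝ)) this
        push_cast at this
        linarith
      rw [hcast]
      calc t * ((p:ℝ)-1) < t * (x/t) := by
            apply mul_lt_mul_of_pos_left hgt ht
        _ = x := by field_simp
    · have hcast : ((p - m - 1 : ℕ) : ℝ) + m + 1 = (p:ℝ) := by
        have : (p - m - 1) + m + 1 = p := by omega
        have := congrArg (Nat.cast (R := ℝ)) this
        push_cast at this
        linarith
      rw [hcast]
      calc x = t * (x/t) := by field_simp
        _ ≤ t * p := mul_le_mul_of_nonneg_left hle ht.le

lemma stmt17aux_disjoint (t : ℝ) (ht : 0 < t) (m : ℕ) :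
    Pairwise (Function.onFun Disjoint (fun q : ℕ => Ioc (t*(q+m)) (t*(q+m+1)))) := by
  have key : ∀ i j : ℕ, i < j →
      Disjoint (Ioc (t*(i+m)) (t*(i+m+1))) (Ioc (t*(j+m)) (t*(j+m+1))) := by
    intro i j hij
    apply Set.Ioc_disjoint_Ioc.mpr
    have h1 : t*((i:ℝ)+m+1) ≤ t*((j:ℝ)+m) := by
      have : (i:ℝ)+1 ≤ (j:ℝ) := by exact_mod_cast hij
      nlinarith
    calc min (t*((i:ℝ)+m+1)) (t*((j:ℝ)+m+1)) ≤ t*((i:ℝ)+m+1) := min_le_left _ _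
      _ ≤ t*((j:ℝ)+m) := h1
      _ ≤ max (t*((i:ℝ)+m)) (t*((j:ℝ)+m)) := le_max_right _ _
  intro i j hij
  rcases lt_or_gt_of_ne hij with h | h
  · exact key i j h
  · exact (key j i h).symm

lemma stmt17aux_summable {k : ℕ} (hk : 1 ≤ k) {t : ℝ} (ht : 0 < t) :
    Summable (fun q : ℕ => ((t*((q:ℝ)+1)) / (Real.exp (2*(t*((q:ℝ)+1))) - 1))^k) := by
  have hgeo : Summable (fun q : ℕ => Real.exp (-t) ^ q * Real.exp (-t)) := by
    refine Summable.mul_right _ (summable_geometric_of_lt_one (Real.exp_pos _).le ?_)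
    rw [← Real.exp_zero]
    exact Real.exp_lt_exp.mpr (by linarith)
  refine Summable.of_nonneg_of_le
    (fun q => pow_nonneg (stmt17aux_g_pos (by positivity)).le k) (fun q => ?_) hgeo
  have hpos : (0:ℝ) < t*((q:ℝ)+1) := by positivity
  calc ((t*((q:ℝ)+1)) / (Real.exp (2*(t*((q:ℝ)+1))) - 1))^k
      ≤ Real.exp (-(t*((q:ℝ)+1))) := stmt17aux_F_le_exp hk hpos
    _ = Real.exp (-t) ^ q * Real.exp (-t) := by
        rw [← pow_succ, ← Real.exp_nat_mul]
        congr 1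
        push_cast
        ring

lemma stmt17aux_piece_low {k : ℕ} (hk : 1 ≤ k) {a b : ℝ} (ha : 0 ≤ a) (hab : a < b) :
    (b - a) * ((b / (Real.exp (2*b) - 1))^k)
      ≤ ∫ x in Ioc a b, (x / (Real.exp (2*x) - 1))^k := by
  have hsub : Ioc a b ⊆ Ioi 0 := fun x hx => lt_of_le_of_lt ha hx.1
  have hint : IntegrableOn (fun x : ℝ => (x / (Real.exp (2*x) - 1))^k) (Ioc a b) :=
    (stmt17aux_F_int hk).mono_set hsub
  have hb : b ∈ Ioi (0:ℝ) := lt_of_le_of_lt ha hab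
  have hmono := setIntegral_mono_on
    (integrableOn_const measure_Ioc_lt_top.ne) hint measurableSet_Ioc
    (fun x hx => stmt17aux_F_anti k (hsub hx) hb hx.2)
  rw [setIntegral_const, Real.volume_real_Ioc_of_le (by linarith),
    smul_eq_mul] at hmono
  exact hmono

lemma stmt17aux_piece_high {k : ℕ} (hk : 1 ≤ k) {a b : ℝ} (ha : 0 < a) (hab : a < b) :
    (∫ x in Ioc a b, (x / (Real.exp (2*x) - 1))^k)
      ≤ (b - a) * ((a / (Real.exp (2*a) - 1))^k) := by
  have hsub : Ioc a b ⊆ Ioi 0 := fun x hx => lt_trans ha hx.1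
  have hint : IntegrableOn (fun x : ℝ => (x / (Real.exp (2*x) - 1))^k) (Ioc a b) :=
    (stmt17aux_F_int hk).mono_set hsub
  have hmono := setIntegral_mono_on hint
    (integrableOn_const measure_Ioc_lt_top.ne) measurableSet_Ioc
    (fun x hx => stmt17aux_F_anti k ha (hsub hx) hx.1.le)
  rw [setIntegral_const, Real.volume_real_Ioc_of_le (by linarith),
    smul_eq_mul] at hmono
  exact hmono

lemma stmt17aux_hasSum (k : ℕ) (hk : 1 ≤ k) {t : ℝ} (ht : 0 < t) (m : ℕ) :
    HasSum (fun q : ℕ => ∫ x in Ioc (t*((q:ℝ)+m)) (t*((q:ℝ)+m+1)), (x / (Real.exp (2*x) - 1))^k)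
      (∫ x in Ioi (t*(m:ℝ)), (x / (Real.exp (2*x) - 1))^k) := by
  have h := hasSum_integral_iUnion (μ := volume)
    (f := fun x : ℝ => (x / (Real.exp (2*x) - 1))^k)
    (s := fun q : ℕ => Ioc (t*((q:ℝ)+m)) (t*((q:ℝ)+m+1)))
    (fun q => measurableSet_Ioc) (stmt17aux_disjoint t ht m) ?_
  · rwa [stmt17aux_union t ht m] at h
  · rw [stmt17aux_union t ht m]
    exact (stmt17aux_F_int hk).mono_set (Ioi_subset_Ioi (by positivity))

lemma stmt17aux_upper {k : ℕ} (hk : 1 ≤ k) {t : ℝ} (ht : 0 < t) :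
    t * ∑' q : ℕ, ((t*((q:ℝ)+1)) / (Real.exp (2*(t*((q:ℝ)+1))) - 1))^k
      ≤ ∫ x in Ioi (0:ℝ), (x / (Real.exp (2*x) - 1))^k := by
  have hHS := stmt17aux_hasSum k hk ht 0
  simp only [Nat.cast_zero, add_zero, mul_zero] at hHS
  rw [← tsum_mul_left]
  rw [← hHS.tsum_eq]
  refine Summable.tsum_le_tsum (fun q => ?_) ((stmt17aux_summable hk ht).mul_left t) hHS.summable
  have hlow := stmt17aux_piece_low hk (a := t*(q:ℝ)) (b := t*((q:ℝ)+1))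
    (by positivity) (by nlinarith)
  have : t*((q:ℝ)+1) - t*(q:ℝ) = t := by ring
  rw [this] at hlow
  exact hlow

lemma stmt17aux_lower {k : ℕ} (hk : 1 ≤ k) {t : ℝ} (ht : 0 < t) :
    (∫ x in Ioi (0:ℝ), (x / (Real.exp (2*x) - 1))^k) - (1/2)*t
      ≤ t * ∑' q : ℕ, ((t*((q:ℝ)+1)) / (Real.exp (2*(t*((q:ℝ)+1))) - 1))^k := by
  have hHS := stmt17aux_hasSum k hk ht 1
  simp only [Nat.cast_one, mul_one] at hHS
  -- ∫ over Ioi t ≤ t * sum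
  have h1 : (∫ x in Ioi t, (x / (Real.exp (2*x) - 1))^k)
      ≤ t * ∑' q : ℕ, ((t*((q:ℝ)+1)) / (Real.exp (2*(t*((q:ℝ)+1))) - 1))^k := by
    rw [← tsum_mul_left, ← hHS.tsum_eq]
    refine Summable.tsum_le_tsum (fun q => ?_) hHS.summable ((stmt17aux_summable hk ht).mul_left t)
    have hhigh := stmt17aux_piece_high hk (a := t*((q:ℝ)+1)) (b := t*((q:ℝ)+1+1))
      (by positivity) (by nlinarith)
    have : t*((q:ℝ)+1+1) - t*((q:ℝ)+1) = t := by ring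
    rw [this] at hhigh
    exact hhigh
  -- ∫ over Ioc 0 t ≤ t/2
  have h2 : (∫ x in Ioc (0:ℝ) t, (x / (Real.exp (2*x) - 1))^k) ≤ (1/2)*t := by
    have hint : IntegrableOn (fun x : ℝ => (x / (Real.exp (2*x) - 1))^k) (Ioc 0 t) :=
      (stmt17aux_F_int hk).mono_set Set.Ioc_subset_Ioi_self
    have hmono := setIntegral_mono_on hint
      (integrableOn_const measure_Ioc_lt_top.ne) measurableSet_Ioc
      (fun x hx => stmt17aux_F_le_half hk hx.1)
    rw [setIntegral_const, Real.volume_real_Ioc_of_le (by linarith),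
      smul_eq_mul] at hmono
    calc (∫ x in Ioc (0:ℝ) t, (x / (Real.exp (2*x) - 1))^k) ≤ (t - 0) * (1/2) := hmono
      _ = (1/2)*t := by ring
  -- split the integral
  have hsplit : (∫ x in Ioi (0:ℝ), (x / (Real.exp (2*x) - 1))^k)
      = (∫ x in Ioc (0:ℝ) t, (x / (Real.exp (2*x) - 1))^k)
        + (∫ x in Ioi t, (x / (Real.exp (2*x) - 1))^k) := by
    rw [← setIntegral_union Ioc_disjoint_Ioi_same measurableSet_Ioi
      ((stmt17aux_F_int hk).mono_set Set.Ioc_subset_Ioi_self)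
      ((stmt17aux_F_int hk).mono_set (Ioi_subset_Ioi ht.le)),
      Set.Ioc_union_Ioi_eq_Ioi ht.le]
  linarith

theorem stmt17 (n : ℕ) (hn : 2 ≤ n) :
    Tendsto (fun t : ℝ => t ^ n * ∑' q : ℕ,
        ((q : ℝ) + 1) ^ (n - 1) *
          Real.exp (-2 * t * ((q : ℝ) + 1) * (n - 1)) /
            (1 - Real.exp (-2 * t * ((q : ℝ) + 1))) ^ (n - 1))
      (nhdsWithin 0 (Set.Ioi 0))
      (nhds (∫ x in Set.Ioi (0 : ℝ),
        x ^ (n - 1) * Real.exp (-2 * x * (n - 1)) /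
          (1 - Real.exp (-2 * x)) ^ (n - 1))) := by
  set k := n - 1 with hkdef
  have hk : 1 ≤ k := by omega
  have hnk : n = k + 1 := by omega
  have hcast : (k:ℝ) = (n:ℝ) - 1 := by
    rw [hkdef, Nat.cast_sub (by omega : 1 ≤ n), Nat.cast_one]
  -- rewrite the integral
  have hIeq : (∫ x in Set.Ioi (0:ℝ),
      x ^ k * Real.exp (-2 * x * ((n:ℝ) - 1)) / (1 - Real.exp (-2 * x)) ^ k)
      = ∫ x in Set.Ioi (0:ℝ), (x / (Real.exp (2*x) - 1))^k := by
    refine setIntegral_congr_fun measurableSet_Ioi (fun x hx => ?_)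
    rw [← hcast]
    exact stmt17aux_identity hx k
  rw [hIeq]
  set I := ∫ x in Set.Ioi (0:ℝ), (x / (Real.exp (2*x) - 1))^k with hI
  have hmain : Tendsto
      (fun t : ℝ => t * ∑' q : ℕ, ((t*((q:ℝ)+1)) / (Real.exp (2*(t*((q:ℝ)+1))) - 1))^k)
      (nhdsWithin 0 (Set.Ioi 0)) (nhds I) := by
    refine tendsto_of_tendsto_of_tendsto_of_le_of_le'
      (g := fun t : ℝ => I - (1/2)*t) (h := fun _ : ℝ => I) ?_ ?_ ?_ ?_
    · have h0 : Tendsto (fun t : ℝ => I - (1/2)*t) (nhds 0) (nhds (I - (1/2)*0)) :=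
        (continuous_const.sub (continuous_const.mul continuous_id)).tendsto 0
      simp only [mul_zero, sub_zero] at h0
      exact h0.mono_left nhdsWithin_le_nhds
    · exact tendsto_const_nhds
    · exact Filter.eventually_of_mem self_mem_nhdsWithin
        (fun t ht => stmt17aux_lower hk ht)
    · exact Filter.eventually_of_mem self_mem_nhdsWithin
        (fun t ht => stmt17aux_upper hk ht)
  refine hmain.congr' ?_
  refine Filter.eventuallyEq_of_mem self_mem_nhdsWithin (fun t ht => ?_)
  have ht : (0:ℝ) < t := ht
  rw [← tsum_mul_left, ← tsum_mul_left]
  refine tsum_congr (fun q => ?_)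
  have hx : (0:ℝ) < t*((q:ℝ)+1) := by positivity
  rw [← stmt17aux_identity hx k, ← hcast]
  rw [show -2*(t*((q:ℝ)+1))*(k:ℝ) = -2*t*((q:ℝ)+1)*(k:ℝ) by ring,
    show -2*(t*((q:ℝ)+1)) = -2*t*((q:ℝ)+1) by ring, hnk]
  rw [mul_pow]; ring
end

section
/- For integer n ≥ 2, the identity ∫₀^∞ x^{n-1}(1/(1-e^{-2x})^{n-1} - 1 + 1/(e^{2x}-1)^{n-1}) dx = ((n-1)/(n·2^{n-2})) ∫₀^∞ xⁿ cosh((n-2)x)/sinh(x)ⁿ dx holds, both integrals being finite. -/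
set_option maxHeartbeats 1000000

open Real MeasureTheory Set Filter Asymptotics Topology

theorem st18_ident (k : ℕ) (x : ℝ) (hx : 0 < x) :
    1 / (1 - Real.exp (-2 * x)) ^ (k+1) - 1 + 1 / (Real.exp (2 * x) - 1) ^ (k+1)
    = Real.cosh ((k+1 : ℝ) * x) / (2 ^ k * Real.sinh x ^ (k+1)) - 1 := by
  have ha : 1 < Real.exp x := Real.one_lt_exp_iff.mpr hx
  set a := Real.exp x with hadef
  have ha0 : 0 < a := Real.exp_pos x
  have hane : a ≠ 0 := ne_of_gt ha0
  have h2 : a ^ 2 - 1 ≠ 0 := by nlinarith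
  have h2p : (a^2 - 1)^(k+1) ≠ 0 := pow_ne_zero _ h2
  have e2 : (1:ℝ) - Real.exp (-2*x) = (a^2 - 1)/a^2 := by
    rw [show (-2:ℝ)*x = -(((2:ℕ):ℝ)*x) by push_cast; ring, Real.exp_neg, Real.exp_nat_mul]
    rw [← hadef]; field_simp
  have e3 : Real.exp (2*x) = a^2 := by
    rw [show (2:ℝ)*x = ((2:ℕ):ℝ)*x by push_cast; ring, Real.exp_nat_mul, ← hadef]
  have e4 : Real.cosh ((k+1:ℝ)*x) = (a^(2*(k+1)) + 1)/(2*a^(k+1)) := by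
    rw [Real.cosh_eq, show ((k:ℝ)+1)*x = ((k+1:ℕ):ℝ)*x by push_cast; ring, Real.exp_neg,
      Real.exp_nat_mul, ← hadef]
    field_simp
    ring
  have e5 : Real.sinh x = (a^2 - 1)/(2*a) := by
    rw [Real.sinh_eq, Real.exp_neg, ← hadef]; field_simp
  rw [e2, e3, e4, e5, div_pow, div_pow]
  field_simp
  ring

theorem st18_derivlem (k : ℕ) (x : ℝ) (hx : 0 < x) :
    HasDerivAt (fun y : ℝ => y^(k+2)/(k+2) *
        (Real.cosh ((k+1:ℝ)*y) / (2^k * Real.sinh y ^ (k+1)) - 1))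
      (x^(k+1) * (Real.cosh ((k+1:ℝ)*x) / (2^k * Real.sinh x ^ (k+1)) - 1)
        - ((k+1:ℝ)/((k+2) * 2^k)) * (x^(k+2) * Real.cosh ((k:ℝ)*x) / Real.sinh x ^ (k+2))) x := by
  have hs : 0 < Real.sinh x := Real.sinh_pos_iff.2 hx
  have hsne : Real.sinh x ≠ 0 := ne_of_gt hs
  have hdne : (2:ℝ)^k * Real.sinh x ^ (k+1) ≠ 0 := by positivity
  have d1 : HasDerivAt (fun y : ℝ => y^(k+2)/(k+2)) (x^(k+1)) x := by
    have := (hasDerivAt_pow (k+2) x).div_const ((k+2):ℝ)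
    refine this.congr_deriv ?_
    field_simp
    rw [show k+2-1 = k+1 from rfl]; push_cast; ring
  have d2 : HasDerivAt (fun y : ℝ => Real.cosh ((k+1:ℝ)*y))
      ((k+1:ℝ) * Real.sinh ((k+1:ℝ)*x)) x := by
    have := (Real.hasDerivAt_cosh ((k+1:ℝ)*x)).comp x
      ((hasDerivAt_id x).const_mul ((k+1:ℝ)))
    refine this.congr_deriv ?_
    ring
  have d3 : HasDerivAt (fun y : ℝ => (2:ℝ)^k * Real.sinh y ^ (k+1))
      ((2:ℝ)^k * ((k+1:ℝ) * Real.sinh x ^ k * Real.cosh x)) x := by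
    have := ((Real.hasDerivAt_sinh x).pow (k+1)).const_mul ((2:ℝ)^k)
    refine this.congr_deriv ?_
    push_cast; ring_nf
  have d6 := d1.mul ((d2.div d3 hdne).sub_const 1)
  refine d6.congr_deriv ?_
  simp only [Pi.div_apply]
  have key : Real.cosh ((k+1:ℝ)*x) * Real.cosh x - Real.sinh ((k+1:ℝ)*x) * Real.sinh x
      = Real.cosh ((k:ℝ)*x) := by
    rw [← Real.cosh_sub]; ring_nf
  rw [← key]
  have hk2 : ((k:ℝ)+2) ≠ 0 := by positivity
  field_simp
  ring

theorem st18_cosh_le (t : ℝ) (ht : 0 ≤ t) : Real.cosh t ≤ Real.exp t := by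
  rw [Real.cosh_eq]
  have := Real.exp_le_exp.2 (neg_le_self ht)
  linarith

theorem st18_exp_le_cosh (t : ℝ) : Real.exp t / 2 ≤ Real.cosh t := by
  rw [Real.cosh_eq]
  have := Real.exp_pos (-t)
  linarith

theorem st18_lbound (k : ℕ) (x : ℝ) (hx : 0 < x) :
    0 ≤ Real.cosh ((k+1:ℝ)*x) / (2^k * Real.sinh x ^ (k+1)) - 1 := by
  have hs : 0 < Real.sinh x := Real.sinh_pos_iff.2 hx
  have hden : 0 < (2:ℝ)^k * Real.sinh x ^ (k+1) := by positivity
  rw [sub_nonneg, le_div_iff₀ hden, one_mul]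
  have hsinh_le : Real.sinh x ≤ Real.exp x / 2 := by
    rw [Real.sinh_eq]
    have := Real.exp_pos (-x)
    linarith
  have h1 : Real.sinh x ^ (k+1) ≤ (Real.exp x / 2)^(k+1) :=
    pow_le_pow_left₀ hs.le hsinh_le _
  have h2 : (2:ℝ)^k * ((Real.exp x/2)^(k+1)) = Real.exp (((k+1:ℕ):ℝ) * x) / 2 := by
    rw [Real.exp_nat_mul, div_pow]
    have h2k : (2:ℝ)^(k+1) = 2 * 2^k := by ring
    rw [h2k]
    field_simp
  have h3 : Real.exp (((k+1:ℕ):ℝ) * x) / 2 ≤ Real.cosh ((k+1:ℝ)*x) := by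
    have := st18_exp_le_cosh (((k+1:ℕ):ℝ) * x)
    convert this using 3 <;> push_cast <;> ring
  nlinarith [pow_nonneg hs.le (k+1), mul_le_mul_of_nonneg_left h1 (by positivity : (0:ℝ) ≤ 2^k)]

theorem st18_tb (k : ℕ) (t : ℝ) (h0 : 0 ≤ t) (h1 : t ≤ 1/2) :
    1 + t^(k+1) ≤ (1 + ((k:ℝ)+2)*2^(k+1)*t) * (1-t)^(k+1) := by
  have hb : 1 - ((k:ℝ)+1)*t ≤ (1-t)^(k+1) := by
    have := one_add_mul_le_pow (by linarith : (-2:ℝ) ≤ -t) (k+1)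
    rw [show (1:ℝ) + -t = 1 - t by ring] at this
    push_cast at this
    linarith
  have hhalf : ((1:ℝ)/2)^(k+1) ≤ (1-t)^(k+1) := pow_le_pow_left₀ (by norm_num) (by linarith) _
  have htp : t^(k+1) ≤ t := by
    calc t^(k+1) ≤ t^1 := pow_le_pow_of_le_one h0 (by linarith) (by omega)
    _ = t := pow_one t
  have c0 : (0:ℝ) ≤ ((k:ℝ)+2)*2^(k+1)*t := by positivity
  have hm := mul_le_mul_of_nonneg_left hhalf c0
  have h2 : ((k:ℝ)+2)*2^(k+1)*t*((1:ℝ)/2)^(k+1) = ((k:ℝ)+2)*t := by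
    rw [mul_assoc (((k:ℝ)+2)), mul_comm ((2:ℝ)^(k+1)), mul_assoc, mul_assoc, ← mul_pow]
    norm_num
  nlinarith [mul_nonneg c0 (le_trans (by positivity) hhalf)]

theorem st18_ubound (k : ℕ) (x : ℝ) (hx : 1 ≤ x) :
    Real.cosh ((k+1:ℝ)*x) / (2^k * Real.sinh x ^ (k+1)) - 1
      ≤ ((k:ℝ)+2)*2^(k+1) * Real.exp (-2*x) := by
  have hx0 : 0 < x := lt_of_lt_of_le one_pos hx
  have ha2 : (2:ℝ) ≤ Real.exp x := by
    have h1 : (2:ℝ) ≤ Real.exp 1 := by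
      have := Real.add_one_le_exp (1:ℝ); linarith
    exact le_trans h1 (Real.exp_le_exp.2 hx)
  set a := Real.exp x with hadef
  have ha0 : 0 < a := Real.exp_pos x
  have hane : a ≠ 0 := ne_of_gt ha0
  have h2 : (0:ℝ) < a ^ 2 - 1 := by nlinarith
  have hat : a^2 * (a^2)⁻¹ = 1 := mul_inv_cancel₀ (by positivity)
  have e2 : Real.exp (-2*x) = (a^2)⁻¹ := by
    rw [show (-2:ℝ)*x = -(((2:ℕ):ℝ)*x) by push_cast; ring, Real.exp_neg, Real.exp_nat_mul, ← hadef]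
  have e4 : Real.cosh ((k+1:ℝ)*x) = ((a^2)^(k+1) + 1)/(2*a^(k+1)) := by
    rw [Real.cosh_eq, show ((k:ℝ)+1)*x = ((k+1:ℕ):ℝ)*x by push_cast; ring, Real.exp_neg,
      Real.exp_nat_mul, ← hadef]
    rw [← pow_mul]
    field_simp
    ring
  have e5 : Real.sinh x = (a^2 - 1)/(2*a) := by
    rw [Real.sinh_eq, Real.exp_neg, ← hadef]; field_simp
  have ht0 : (0:ℝ) ≤ (a^2)⁻¹ := by positivity
  have ht1 : (a^2)⁻¹ ≤ 1/2 := by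
    rw [inv_le_comm₀ (by positivity) (by norm_num)]
    nlinarith
  have tb := st18_tb k ((a^2)⁻¹) ht0 ht1
  have e6 : (a^2)^(k+1) * (1 + ((a^2)⁻¹)^(k+1)) = (a^2)^(k+1) + 1 := by
    rw [mul_add, mul_one, ← mul_pow, hat, one_pow]
  have e7 : (a^2)^(k+1) * (1 - (a^2)⁻¹)^(k+1) = (a^2 - 1)^(k+1) := by
    rw [← mul_pow, mul_sub, mul_one, hat]
  have key : (a^2)^(k+1) + 1 ≤ (1 + ((k:ℝ)+2)*2^(k+1)*(a^2)⁻¹) * (a^2-1)^(k+1) := by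
    have := mul_le_mul_of_nonneg_left tb (by positivity : (0:ℝ) ≤ (a^2)^(k+1))
    rw [e6] at this
    calc (a^2)^(k+1) + 1 ≤ (a^2)^(k+1) * ((1 + ((k:ℝ)+2)*2^(k+1)*(a^2)⁻¹) * (1-(a^2)⁻¹)^(k+1)) := this
    _ = (1 + ((k:ℝ)+2)*2^(k+1)*(a^2)⁻¹) * ((a^2)^(k+1) * (1-(a^2)⁻¹)^(k+1)) := by ring
    _ = (1 + ((k:ℝ)+2)*2^(k+1)*(a^2)⁻¹) * (a^2-1)^(k+1) := by rw [e7]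
  have hden : (0:ℝ) < (a^2-1)^(k+1) := pow_pos h2 _
  have e8 : Real.cosh ((k+1:ℝ)*x) / (2^k * Real.sinh x ^ (k+1))
      = ((a^2)^(k+1) + 1)/(a^2-1)^(k+1) := by
    rw [e4, e5, div_pow]
    rw [div_eq_div_iff (by positivity) (ne_of_gt hden)]
    field_simp
    ring
  rw [e8, e2, sub_le_iff_le_add, div_le_iff₀ hden]
  linarith [key]

theorem st18_hbound (k : ℕ) (x : ℝ) (hx : 1 ≤ x) :
    x^(k+2) * Real.cosh ((k:ℝ)*x) / Real.sinh x ^ (k+2)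
      ≤ 4^(k+2) * (x^(k+2) * Real.exp (-2*x)) := by
  have hx0 : 0 < x := lt_of_lt_of_le one_pos hx
  have hs : 0 < Real.sinh x := Real.sinh_pos_iff.2 hx0
  have ha2 : (2:ℝ) ≤ Real.exp x := by
    have h1 : (2:ℝ) ≤ Real.exp 1 := by
      have := Real.add_one_le_exp (1:ℝ); linarith
    exact le_trans h1 (Real.exp_le_exp.2 hx)
  set a := Real.exp x with hadef
  have ha0 : 0 < a := Real.exp_pos x
  have hane : a ≠ 0 := ne_of_gt ha0
  have hainv : a * a⁻¹ = 1 := mul_inv_cancel₀ hane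
  have hsinh_ge : a / 4 ≤ Real.sinh x := by
    rw [Real.sinh_eq, Real.exp_neg, ← hadef]
    have hinv : a⁻¹ ≤ 1/2 := by
      rw [inv_le_comm₀ ha0 (by norm_num)]; linarith
    nlinarith
  have hcosh : Real.cosh ((k:ℝ)*x) ≤ a^k := by
    have h1 : Real.cosh ((k:ℝ)*x) ≤ Real.exp ((k:ℝ)*x) :=
      st18_cosh_le _ (by positivity)
    calc Real.cosh ((k:ℝ)*x) ≤ Real.exp ((k:ℝ)*x) := h1
    _ = a^k := by rw [Real.exp_nat_mul, ← hadef]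
  have hnum : x^(k+2) * Real.cosh ((k:ℝ)*x) ≤ x^(k+2) * a^k :=
    mul_le_mul_of_nonneg_left hcosh (by positivity)
  have hdenom : (a/4)^(k+2) ≤ Real.sinh x ^ (k+2) :=
    pow_le_pow_left₀ (by positivity) hsinh_ge _
  have step : x^(k+2) * Real.cosh ((k:ℝ)*x) / Real.sinh x ^ (k+2)
      ≤ (x^(k+2) * a^k) / (a/4)^(k+2) := by
    apply div_le_div₀ (by positivity) hnum (by positivity) hdenom
  refine le_trans step (le_of_eq ?_)
  have e2 : Real.exp (-2*x) = (a^2)⁻¹ := by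
    rw [show (-2:ℝ)*x = -(((2:ℕ):ℝ)*x) by push_cast; ring, Real.exp_neg, Real.exp_nat_mul, ← hadef]
  rw [e2, div_pow]
  rw [div_div_eq_mul_div]
  rw [div_eq_iff (by positivity)]
  field_simp
  ring

theorem st18_int_helper {f : ℝ → ℝ} {c C : ℝ} (k : ℕ)
    (hmeas : AEStronglyMeasurable f (volume : Measure ℝ))
    (hcont : ContinuousOn f (Ici 1))
    (hb0 : ∀ x ∈ Ioc (0:ℝ) 1, ‖f x‖ ≤ c)
    (hb1 : ∀ x, 1 ≤ x → ‖f x‖ ≤ C * (x^(k+2) * Real.exp (-2*x))) :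
    IntegrableOn f (Ioi 0) := by
  rw [← Ioc_union_Ioi_eq_Ioi (zero_le_one : (0:ℝ) ≤ 1)]
  refine IntegrableOn.union ?_ ?_
  · refine Measure.integrableOn_of_bounded (M := c) (by simp) hmeas ?_
    rw [ae_restrict_iff' measurableSet_Ioc]
    exact ae_of_all _ hb0
  · refine integrable_of_isBigO_exp_neg (b := 1) one_pos hcont ?_
    have t0 := tendsto_pow_mul_exp_neg_atTop_nhds_zero (k+2)
    refine IsBigO.of_bound (max C 0) ?_
    filter_upwards [eventually_ge_atTop (1:ℝ), t0.eventually_le_const (zero_lt_one)]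
      with x h1 h2
    have hx0 : (0:ℝ) < x := lt_of_lt_of_le one_pos h1
    have key : x^(k+2) * Real.exp (-2*x) ≤ Real.exp (-1*x) := by
      have e1 : Real.exp (-2*x) = Real.exp (-x) * Real.exp (-1*x) := by
        rw [← Real.exp_add]; ring_nf
      rw [e1, ← mul_assoc]
      calc x^(k+2) * Real.exp (-x) * Real.exp (-1*x) ≤ 1 * Real.exp (-1*x) := by
            apply mul_le_mul_of_nonneg_right h2 (Real.exp_pos _).le
      _ = Real.exp (-1*x) := one_mul _
    calc ‖f x‖ ≤ C * (x^(k+2) * Real.exp (-2*x)) := hb1 x h1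
    _ ≤ max C 0 * (x^(k+2) * Real.exp (-2*x)) :=
        mul_le_mul_of_nonneg_right (le_max_left _ _) (by positivity)
    _ ≤ max C 0 * Real.exp (-1*x) :=
        mul_le_mul_of_nonneg_left key (le_max_right _ _)
    _ = max C 0 * ‖Real.exp (-1*x)‖ := by rw [Real.norm_eq_abs, abs_of_pos (Real.exp_pos _)]

theorem st18_small (k : ℕ) (x : ℝ) (h0 : 0 < x) (h1 : x ≤ 1) :
    x^(k+1) * (Real.cosh ((k+1:ℝ)*x) / (2^k * Real.sinh x ^ (k+1))) ≤ Real.exp ((k:ℝ)+1) := by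
  have hs : 0 < Real.sinh x := Real.sinh_pos_iff.2 h0
  have hd : (0:ℝ) < 2^k * Real.sinh x ^ (k+1) := by positivity
  rw [mul_div_assoc', div_le_iff₀ hd]
  have p1 : x^(k+1) ≤ Real.sinh x^(k+1) :=
    pow_le_pow_left₀ h0.le (Real.self_le_sinh_iff.2 h0.le) _
  have p2 : Real.cosh ((k+1:ℝ)*x) ≤ Real.exp ((k:ℝ)+1) := by
    have a1 : Real.cosh ((k+1:ℝ)*x) ≤ Real.exp ((k+1:ℝ)*x) :=
      st18_cosh_le _ (by positivity)
    have a2 : Real.exp ((k+1:ℝ)*x) ≤ Real.exp ((k:ℝ)+1) := by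
      apply Real.exp_le_exp.2
      have := mul_le_of_le_one_right (by positivity : (0:ℝ) ≤ (k:ℝ)+1) h1
      linarith
    linarith
  have q : x^(k+1) * Real.cosh ((k+1:ℝ)*x) ≤ Real.sinh x^(k+1) * Real.exp ((k:ℝ)+1) :=
    mul_le_mul p1 p2 (Real.cosh_pos _).le (pow_nonneg hs.le _)
  have p3 : (1:ℝ) ≤ 2^k := one_le_pow₀ one_le_two
  have r : Real.sinh x^(k+1) * Real.exp ((k:ℝ)+1)
      ≤ 2^k * (Real.sinh x^(k+1) * Real.exp ((k:ℝ)+1)) :=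
    le_mul_of_one_le_left (by positivity) p3
  calc x^(k+1) * Real.cosh ((k+1:ℝ)*x) ≤ Real.sinh x^(k+1) * Real.exp ((k:ℝ)+1) := q
  _ ≤ 2^k * (Real.sinh x^(k+1) * Real.exp ((k:ℝ)+1)) := r
  _ = Real.exp ((k:ℝ)+1) * (2^k * Real.sinh x ^ (k+1)) := by ring

theorem st18_g_int (k : ℕ) :
    IntegrableOn (fun x : ℝ =>
      x^(k+1) * (Real.cosh ((k+1:ℝ)*x) / (2^k * Real.sinh x ^ (k+1)) - 1)) (Ioi 0) := by
  apply st18_int_helper (c := Real.exp ((k:ℝ)+1)) (C := ((k:ℝ)+2)*2^(k+1)) k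
  · apply Measurable.aestronglyMeasurable
    apply Measurable.mul (by measurability)
    apply Measurable.sub _ measurable_const
    exact (Real.continuous_cosh.comp (continuous_const.mul continuous_id)).measurable.div
      (by measurability)
  · apply ContinuousOn.mul (continuous_pow _).continuousOn
    apply ContinuousOn.sub _ continuousOn_const
    apply ContinuousOn.div
    · exact (Real.continuous_cosh.comp (continuous_const.mul continuous_id)).continuousOn
    · exact (continuous_const.mul (Real.continuous_sinh.pow _)).continuousOn
    · intro x hx
      have hx0 : (0:ℝ) < x := lt_of_lt_of_le one_pos hx
      have := Real.sinh_pos_iff.2 hx0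
      positivity
  · intro x hx
    have hpos : 0 ≤ x^(k+1) * (Real.cosh ((k+1:ℝ)*x) / (2^k * Real.sinh x ^ (k+1)) - 1) :=
      mul_nonneg (pow_nonneg hx.1.le _) (st18_lbound k x hx.1)
    rw [Real.norm_eq_abs, abs_of_nonneg hpos]
    have := st18_small k x hx.1 hx.2
    nlinarith [pow_nonneg hx.1.le (k+1)]
  · intro x hx
    have hx0 : (0:ℝ) < x := lt_of_lt_of_le one_pos hx
    have hpos : 0 ≤ x^(k+1) * (Real.cosh ((k+1:ℝ)*x) / (2^k * Real.sinh x ^ (k+1)) - 1) :=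
      mul_nonneg (by positivity) (st18_lbound k x hx0)
    rw [Real.norm_eq_abs, abs_of_nonneg hpos]
    have hb := st18_ubound k x hx
    have h1 : x^(k+1) * (Real.cosh ((k+1:ℝ)*x) / (2^k * Real.sinh x ^ (k+1)) - 1)
        ≤ x^(k+1) * (((k:ℝ)+2)*2^(k+1) * Real.exp (-2*x)) :=
      mul_le_mul_of_nonneg_left hb (by positivity)
    have h2 : x^(k+1) ≤ x^(k+2) := pow_le_pow_right₀ hx (by omega)
    calc x^(k+1) * (Real.cosh ((k+1:ℝ)*x) / (2^k * Real.sinh x ^ (k+1)) - 1)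
        ≤ x^(k+1) * (((k:ℝ)+2)*2^(k+1) * Real.exp (-2*x)) := h1
    _ ≤ x^(k+2) * (((k:ℝ)+2)*2^(k+1) * Real.exp (-2*x)) :=
        mul_le_mul_of_nonneg_right h2 (by positivity)
    _ = ((k:ℝ)+2)*2^(k+1) * (x^(k+2) * Real.exp (-2*x)) := by ring

theorem st18_h_int (k : ℕ) :
    IntegrableOn (fun x : ℝ =>
      x^(k+2) * Real.cosh ((k:ℝ)*x) / Real.sinh x ^ (k+2)) (Ioi 0) := by
  apply st18_int_helper (c := Real.exp (k:ℝ)) (C := 4^(k+2)) k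
  · apply Measurable.aestronglyMeasurable
    exact ((measurable_id.pow_const _).mul
      (Real.continuous_cosh.comp (continuous_const.mul continuous_id)).measurable).div
      (by measurability)
  · apply ContinuousOn.div
    · exact ((continuous_pow _).mul
        (Real.continuous_cosh.comp (continuous_const.mul continuous_id))).continuousOn
    · exact (Real.continuous_sinh.pow _).continuousOn
    · intro x hx
      have hx0 : (0:ℝ) < x := lt_of_lt_of_le one_pos hx
      have := Real.sinh_pos_iff.2 hx0
      positivity
  · intro x hx
    have hx0 := hx.1
    have hs : 0 < Real.sinh x := Real.sinh_pos_iff.2 hx0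
    have hpos : 0 ≤ x^(k+2) * Real.cosh ((k:ℝ)*x) / Real.sinh x ^ (k+2) := by
      have := (Real.cosh_pos ((k:ℝ)*x)).le
      positivity
    rw [Real.norm_eq_abs, abs_of_nonneg hpos]
    rw [div_le_iff₀ (by positivity)]
    have p1 : x^(k+2) ≤ Real.sinh x^(k+2) :=
      pow_le_pow_left₀ hx0.le (Real.self_le_sinh_iff.2 hx0.le) _
    have p2 : Real.cosh ((k:ℝ)*x) ≤ Real.exp (k:ℝ) := by
      have a1 : Real.cosh ((k:ℝ)*x) ≤ Real.exp ((k:ℝ)*x) := st18_cosh_le _ (by positivity)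
      have a2 : Real.exp ((k:ℝ)*x) ≤ Real.exp (k:ℝ) := by
        apply Real.exp_le_exp.2
        have := mul_le_of_le_one_right (by positivity : (0:ℝ) ≤ (k:ℝ)) hx.2
        linarith
      linarith
    have q := mul_le_mul p1 p2 (Real.cosh_pos _).le (pow_nonneg hs.le _)
    linarith [q]
  · intro x hx
    have hx0 : (0:ℝ) < x := lt_of_lt_of_le one_pos hx
    have hs : 0 < Real.sinh x := Real.sinh_pos_iff.2 hx0
    have hpos : 0 ≤ x^(k+2) * Real.cosh ((k:ℝ)*x) / Real.sinh x ^ (k+2) := by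
      have := (Real.cosh_pos ((k:ℝ)*x)).le
      positivity
    rw [Real.norm_eq_abs, abs_of_nonneg hpos]
    exact st18_hbound k x hx

theorem st18_htop (k : ℕ) :
    Tendsto (fun y : ℝ => y^(k+2)/(k+2) *
        (Real.cosh ((k+1:ℝ)*y) / (2^k * Real.sinh y ^ (k+1)) - 1)) atTop (𝓝 0) := by
  have g0 := tendsto_pow_mul_exp_neg_atTop_nhds_zero (k+2)
  have ge := Real.tendsto_exp_neg_atTop_nhds_zero
  have glim : Tendsto (fun x : ℝ => (2:ℝ)^(k+1) * (x^(k+2) * Real.exp (-x) * Real.exp (-x)))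
      atTop (𝓝 0) := by
    have := (g0.mul ge).const_mul ((2:ℝ)^(k+1))
    simpa using this
  apply squeeze_zero_norm' _ glim
  filter_upwards [eventually_ge_atTop (1:ℝ)] with x hx
  have hx0 : (0:ℝ) < x := lt_of_lt_of_le one_pos hx
  have hk2 : (0:ℝ) < (k:ℝ)+2 := by positivity
  have hpos : 0 ≤ x^(k+2)/((k:ℝ)+2) *
      (Real.cosh ((k+1:ℝ)*x) / (2^k * Real.sinh x ^ (k+1)) - 1) :=
    mul_nonneg (by positivity) (st18_lbound k x hx0)
  rw [Real.norm_eq_abs, abs_of_nonneg hpos]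
  have hb := st18_ubound k x hx
  have h1 : x^(k+2)/((k:ℝ)+2) * (Real.cosh ((k+1:ℝ)*x) / (2^k * Real.sinh x ^ (k+1)) - 1)
      ≤ x^(k+2)/((k:ℝ)+2) * (((k:ℝ)+2)*2^(k+1) * Real.exp (-2*x)) :=
    mul_le_mul_of_nonneg_left hb (by positivity)
  have e : Real.exp (-x) * Real.exp (-x) = Real.exp (-2*x) := by
    rw [← Real.exp_add]; ring_nf
  have h2 : x^(k+2)/((k:ℝ)+2) * (((k:ℝ)+2)*2^(k+1) * Real.exp (-2*x))
      = (2:ℝ)^(k+1) * (x^(k+2) * Real.exp (-x) * Real.exp (-x)) := by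
    rw [← e]
    field_simp
  linarith [h1, h2]

theorem st18_hcont0 (k : ℕ) :
    ContinuousWithinAt (fun y : ℝ => y^(k+2)/(k+2) *
        (Real.cosh ((k+1:ℝ)*y) / (2^k * Real.sinh y ^ (k+1)) - 1)) (Ici 0) 0 := by
  have hF0 : (fun y : ℝ => y^(k+2)/(k+2) *
      (Real.cosh ((k+1:ℝ)*y) / (2^k * Real.sinh y ^ (k+1)) - 1)) 0 = 0 := by
    simp
  rw [ContinuousWithinAt]
  have h0 : (0:ℝ) ^ (k + 2) / ((k:ℝ) + 2) *
      (Real.cosh (((k:ℝ) + 1) * 0) / (2 ^ k * Real.sinh 0 ^ (k + 1)) - 1) = 0 := by simp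
  rw [h0]
  have glim : Tendsto (fun x : ℝ => Real.exp ((k:ℝ)+1) * x) (𝓝[Ici 0] 0) (𝓝 0) := by
    have : Tendsto (fun x : ℝ => Real.exp ((k:ℝ)+1) * x) (𝓝 0) (𝓝 (Real.exp ((k:ℝ)+1) * 0)) :=
      (continuous_const.mul continuous_id).tendsto 0
    simpa using this.mono_left nhdsWithin_le_nhds
  apply squeeze_zero_norm' _ glim
  filter_upwards [self_mem_nhdsWithin,
    mem_nhdsWithin_of_mem_nhds (Iio_mem_nhds (zero_lt_one))] with x hx hlt
  rcases eq_or_lt_of_le (mem_Ici.1 hx) with heq | hpos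
  · rw [← heq]; simp
  · have hx1 : x ≤ 1 := le_of_lt (mem_Iio.1 hlt)
    have hF : 0 ≤ x^(k+2)/((k:ℝ)+2) *
        (Real.cosh ((k+1:ℝ)*x) / (2^k * Real.sinh x ^ (k+1)) - 1) :=
      mul_nonneg (by positivity) (st18_lbound k x hpos)
    rw [Real.norm_eq_abs, abs_of_nonneg hF]
    have hsm := st18_small k x hpos hx1
    have hu := st18_lbound k x hpos
    -- F x = (x/(k+2)) * (x^(k+1) * u) ≤ x * (x^(k+1) * D) ≤ x * exp(k+1)
    have key : x^(k+2)/((k:ℝ)+2) * (Real.cosh ((k+1:ℝ)*x) / (2^k * Real.sinh x ^ (k+1)) - 1)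
        ≤ x * (x^(k+1) * (Real.cosh ((k+1:ℝ)*x) / (2^k * Real.sinh x ^ (k+1)))) := by
      have e1 : x^(k+2)/((k:ℝ)+2) * (Real.cosh ((k+1:ℝ)*x) / (2^k * Real.sinh x ^ (k+1)) - 1)
          = (x/((k:ℝ)+2)) * (x^(k+1) * (Real.cosh ((k+1:ℝ)*x) / (2^k * Real.sinh x ^ (k+1)) - 1)) := by
        field_simp; ring
      rw [e1]
      have hq : 0 ≤ x^(k+1) * (Real.cosh ((k+1:ℝ)*x) / (2^k * Real.sinh x ^ (k+1)) - 1) :=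
        mul_nonneg (by positivity) hu
      have h3 : x/((k:ℝ)+2) ≤ x := by
        rw [div_le_iff₀ (by positivity)]
        nlinarith [hpos.le]
      calc (x/((k:ℝ)+2)) * (x^(k+1) * (Real.cosh ((k+1:ℝ)*x) / (2^k * Real.sinh x ^ (k+1)) - 1))
          ≤ x * (x^(k+1) * (Real.cosh ((k+1:ℝ)*x) / (2^k * Real.sinh x ^ (k+1)) - 1)) :=
            mul_le_mul_of_nonneg_right h3 hq
      _ ≤ x * (x^(k+1) * (Real.cosh ((k+1:ℝ)*x) / (2^k * Real.sinh x ^ (k+1)))) := by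
            apply mul_le_mul_of_nonneg_left _ hpos.le
            apply mul_le_mul_of_nonneg_left _ (by positivity)
            linarith [st18_lbound k x hpos]
    calc x^(k+2)/((k:ℝ)+2) * (Real.cosh ((k+1:ℝ)*x) / (2^k * Real.sinh x ^ (k+1)) - 1)
        ≤ x * (x^(k+1) * (Real.cosh ((k+1:ℝ)*x) / (2^k * Real.sinh x ^ (k+1)))) := key
    _ ≤ x * Real.exp ((k:ℝ)+1) := mul_le_mul_of_nonneg_left hsm hpos.le
    _ = Real.exp ((k:ℝ)+1) * x := by ring

theorem stmt18 (n : ℕ) (hn : 2 ≤ n) :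
    IntegrableOn (fun x : ℝ =>
        x ^ (n - 1) * (1 / (1 - Real.exp (-2 * x)) ^ (n - 1) - 1 +
          1 / (Real.exp (2 * x) - 1) ^ (n - 1))) (Set.Ioi 0) ∧
    IntegrableOn (fun x : ℝ =>
        x ^ n * Real.cosh ((n - 2) * x) / Real.sinh x ^ n) (Set.Ioi 0) ∧
    (∫ x in Set.Ioi (0 : ℝ),
        x ^ (n - 1) * (1 / (1 - Real.exp (-2 * x)) ^ (n - 1) - 1 +
          1 / (Real.exp (2 * x) - 1) ^ (n - 1)))
      = ((n - 1 : ℝ) / (n * 2 ^ (n - 2))) *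
        ∫ x in Set.Ioi (0 : ℝ),
          x ^ n * Real.cosh ((n - 2) * x) / Real.sinh x ^ n := by
  obtain ⟨k, rfl⟩ : ∃ k, n = k + 2 := ⟨n - 2, by omega⟩
  have hc1 : ((k+2:ℕ):ℝ) - 1 = ((k:ℝ)+1) := by push_cast; ring
  have hc2 : ((k+2:ℕ):ℝ) - 2 = (k:ℝ) := by push_cast; ring
  have hc3 : ((k+2:ℕ):ℝ) = ((k:ℝ)+2) := by push_cast; ring
  simp only [show k+2-1 = k+1 from rfl, show k+2-2 = k from rfl, hc1, hc2]
  simp only [hc3]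
  have hEq : EqOn
      (fun x : ℝ => x^(k+1) * (Real.cosh ((k+1:ℝ)*x) / (2^k * Real.sinh x ^ (k+1)) - 1))
      (fun x : ℝ => x^(k+1) * (1/(1 - Real.exp (-2*x))^(k+1) - 1
        + 1/(Real.exp (2*x) - 1)^(k+1))) (Ioi 0) := by
    intro x hx
    simp only
    rw [st18_ident k x hx]
  have hgint := st18_g_int k
  have hhint := st18_h_int k
  refine ⟨hgint.congr_fun hEq measurableSet_Ioi, hhint, ?_⟩
  have hint : IntegrableOn (fun x : ℝ =>
      x^(k+1) * (Real.cosh ((k+1:ℝ)*x) / (2^k * Real.sinh x ^ (k+1)) - 1)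
        - ((k+1:ℝ)/(((k:ℝ)+2) * 2^k)) * (x^(k+2) * Real.cosh ((k:ℝ)*x) / Real.sinh x ^ (k+2))) (Ioi 0) :=
    hgint.sub (hhint.const_mul _)
  have hibp := integral_Ioi_of_hasDerivAt_of_tendsto
    (f := fun y : ℝ => y^(k+2)/(k+2) *
        (Real.cosh ((k+1:ℝ)*y) / (2^k * Real.sinh y ^ (k+1)) - 1))
    (f' := fun x : ℝ => x^(k+1) * (Real.cosh ((k+1:ℝ)*x) / (2^k * Real.sinh x ^ (k+1)) - 1)
        - ((k+1:ℝ)/(((k:ℝ)+2) * 2^k)) * (x^(k+2) * Real.cosh ((k:ℝ)*x) / Real.sinh x ^ (k+2)))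
    (st18_hcont0 k) (fun x hx => st18_derivlem k x hx) hint (st18_htop k)
  have hF0 : (fun y : ℝ => y^(k+2)/(k+2) *
      (Real.cosh ((k+1:ℝ)*y) / (2^k * Real.sinh y ^ (k+1)) - 1)) 0 = 0 := by simp
  beta_reduce at hF0
  rw [hF0, sub_zero] at hibp
  rw [integral_sub hgint (hhint.const_mul _), integral_const_mul] at hibp
  rw [← setIntegral_congr_fun measurableSet_Ioi hEq]
  linarith [hibp]
end
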